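/- arXiv:2203.07305 — 6 statements merged into one kernel-verified Lean document; each statement's English description precedes it below -/
import Mathlib

section
/- Let 0 ≤ μ < L < ∞, let f ∈ F_{μ,L} have global minimizer x⋆, and set f̃(x) = f(x) − (μ/2)‖x − x⋆‖² (so ∇f̃(x) = ∇f(x) − μ(x − x⋆)). Let N ≥ 1 and let stepsizes {h_{i,j}}_{0≤j<i≤N} be given. Define {α_{i,j}}_{0≤j<i≤N} by α_{i,i−1} = h_{i,i−1} for i ∈ [1:N] and α_{i,j} = α_{i−1,j} + h_{i,j} − (μ/L) Σ_{k=j+1}^{i−1} h_{i,k} α_{k,j} for i ∈ [1:N] and j ∈ [0:i−2]. If points x_0, x_1, …, x_N ∈ ℝ^d satisfy x_i = x_{i−1} − (1/L) Σ_{j=0}^{i−1} h_{i,j} ∇f(x_j) for all i ∈ [1:N], then for all i ∈ [1:N] they also satisfy x_i = x⋆ + (x_0 − x⋆)(1 − (μ/L) Σ_{j=0}^{i−1} α_{i,j}) − Σ_{j=0}^{i−1} (α_{i,j}/L) ∇f̃(x_j). -/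
open scoped RealInnerProductSpace

set_option maxHeartbeats 1000000 in
/-- Reparametrized iterates. If `x_i = x_{i-1} - (1/L) ∑_{j<i} h_{i,j} ∇f(x_j)`
and `α` is defined from `h` via the stated recursion, then
`x_i = x⋆ + (x_0 - x⋆)(1 - (μ/L) ∑_{j<i} α_{i,j}) - ∑_{j<i} (α_{i,j}/L) ∇f̃(x_j)`,
where `f̃(x) = f(x) - (μ/2)‖x - x⋆‖²`. -/
theorem stmt_1 (d : ℕ) (μ L : ℝ) (hμ : 0 ≤ μ) (hμL : μ < L)
    (N : ℕ) (hN : 1 ≤ N)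
    (f : EuclideanSpace ℝ (Fin d) → ℝ) (hf : Differentiable ℝ f)
    (hsc : ConvexOn ℝ Set.univ fun x => f x - μ / 2 * ‖x‖ ^ 2)
    (hlip : ∀ x y, ‖gradient f x - gradient f y‖ ≤ L * ‖x - y‖)
    (xstar : EuclideanSpace ℝ (Fin d)) (hxstar : ∀ z, f xstar ≤ f z)
    (ftilde : EuclideanSpace ℝ (Fin d) → ℝ)
    (hftilde : ∀ x, ftilde x = f x - μ / 2 * ‖x - xstar‖ ^ 2)
    (h α : ℕ → ℕ → ℝ)
    (hα1 : ∀ i, 1 ≤ i → i ≤ N → α i (i - 1) = h i (i - 1))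
    (hα2 : ∀ i, 1 ≤ i → i ≤ N → ∀ j, j + 2 ≤ i →
      α i j = α (i - 1) j + h i j
        - μ / L * ∑ k ∈ Finset.Icc (j + 1) (i - 1), h i k * α k j)
    (x : ℕ → EuclideanSpace ℝ (Fin d))
    (hx : ∀ i, 1 ≤ i → i ≤ N →
      x i = x (i - 1) - (1 / L) • ∑ j ∈ Finset.range i, h i j • gradient f (x j)) :
    ∀ i, 1 ≤ i → i ≤ N →
      x i = xstar + (1 - μ / L * ∑ j ∈ Finset.range i, α i j) • (x 0 - xstar)
        - ∑ j ∈ Finset.range i, (α i j / L) • gradient ftilde (x j) := by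
  have hL : L ≠ 0 := by linarith
  -- the gradient of ftilde
  have hgrad : ∀ z, gradient ftilde z = gradient f z - μ • (z - xstar) := by
    intro z
    have h1 : HasGradientAt f (gradient f z) z := (hf z).hasGradientAt
    rw [hasGradientAt_iff_hasFDerivAt] at h1
    have h2 : HasFDerivAt (fun w : EuclideanSpace ℝ (Fin d) => ‖w - xstar‖ ^ 2)
        (2 • ((innerSL ℝ) (z - xstar)).comp (ContinuousLinearMap.id ℝ (EuclideanSpace ℝ (Fin d)))) z :=
      ((hasFDerivAt_id z).sub_const xstar).norm_sq
    have h3 := h1.sub (h2.const_mul (μ/2))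
    have h3' : HasFDerivAt ftilde _ z :=
      h3.congr_of_eventuallyEq (Filter.Eventually.of_forall fun w => by rw [hftilde]; rfl)
    have h4 : HasGradientAt ftilde (gradient f z - μ • (z - xstar)) z := by
      rw [hasGradientAt_iff_hasFDerivAt]
      refine h3'.congr_fderiv ?_
      apply ContinuousLinearMap.ext
      intro w
      simp [inner_sub_left, real_inner_smul_left]
      ring
    exact h4.gradient
  set e := x 0 - xstar with he
  set v : ℕ → EuclideanSpace ℝ (Fin d) := fun j => gradient ftilde (x j) with hv
  set g : ℕ → EuclideanSpace ℝ (Fin d) := fun j => gradient f (x j) with hg0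
  have hgv : ∀ j, g j = v j + μ • (x j - xstar) := by
    intro j
    rw [hv, hg0]
    simp only [hgrad (x j)]
    abel
  set c : ℕ → ℝ := fun j => 1 - μ / L * ∑ k ∈ Finset.range j, α j k with hc
  -- main claim by strong induction
  have key : ∀ i, i ≤ N →
      x i = xstar + c i • e - ∑ j ∈ Finset.range i, (α i j / L) • v j := by
    intro i
    induction i using Nat.strong_induction_on with
    | _ i IH =>
      intro hiN
      match i with
      | 0 =>
        simp only [hc, Finset.range_zero, Finset.sum_empty, mul_zero, sub_zero, one_smul, he]
        abel
      | (m + 1) =>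
        have hiN' : m + 1 ≤ N := hiN
        -- the update rule
        have hxi : x (m + 1) = x m - (1 / L) • ∑ j ∈ Finset.range (m + 1),
            h (m + 1) j • g j := by
          have := hx (m + 1) (by omega) hiN'
          simpa using this
        -- induction hypothesis, for all j ≤ m
        have hIH : ∀ j, j ≤ m → x j - xstar = c j • e - ∑ k ∈ Finset.range j, (α j k / L) • v k := by
          intro j hj
          have := IH j (by omega) (by omega)
          rw [this]; abel
        -- alpha recursion at level m+1, restated
        have hα1' : α (m + 1) m = h (m + 1) m := by
          have := hα1 (m + 1) (by omega) hiN'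
          simpa using this
        have hα2' : ∀ k, k < m → α (m + 1) k = α m k + h (m + 1) k
            - μ / L * ∑ j ∈ Finset.Icc (k + 1) m, h (m + 1) j * α j k := by
          intro k hk
          have := hα2 (m + 1) (by omega) hiN' k (by omega)
          simpa using this
        -- scalar identity for the sums of alpha
        have hS : ∑ k ∈ Finset.range (m + 1), α (m + 1) k
            = (∑ k ∈ Finset.range m, α m k) + ∑ j ∈ Finset.range (m + 1), h (m + 1) j
              - μ / L * ∑ j ∈ Finset.range (m + 1),
                  h (m + 1) j * ∑ k ∈ Finset.range j, α j k := by
          rw [Finset.sum_range_succ, Finset.sum_congr rfl (fun k hk => hα2' k (Finset.mem_range.mp hk))]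
          rw [Finset.sum_sub_distrib, Finset.sum_add_distrib, ← Finset.mul_sum]
          have hswap : ∑ k ∈ Finset.range m, ∑ j ∈ Finset.Icc (k + 1) m, h (m + 1) j * α j k
              = ∑ j ∈ Finset.range (m + 1), ∑ k ∈ Finset.range j, h (m + 1) j * α j k := by
            apply Finset.sum_comm'
            intro a b
            simp only [Finset.mem_range, Finset.mem_Icc]
            omega
          rw [hswap]
          have : ∀ j ∈ Finset.range (m + 1), ∑ k ∈ Finset.range j, h (m + 1) j * α j k
              = h (m + 1) j * ∑ k ∈ Finset.range j, α j k := fun j _ => (Finset.mul_sum _ _ _).symm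
          rw [Finset.sum_congr rfl this, Finset.sum_range_succ (f := fun j => h (m + 1) j), hα1']
          ring
        -- the coefficient identity for e
        have hA : c m - μ / L * ∑ j ∈ Finset.range (m + 1), h (m + 1) j * c j = c (m + 1) := by
          have hR : ∑ j ∈ Finset.range (m + 1), h (m + 1) j * c j
              = ∑ j ∈ Finset.range (m + 1), h (m + 1) j
                - μ / L * ∑ j ∈ Finset.range (m + 1),
                    h (m + 1) j * ∑ k ∈ Finset.range j, α j k := by
            simp only [hc, mul_sub, mul_one]
            rw [Finset.sum_sub_distrib]
            congr 1
            rw [Finset.mul_sum]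
            exact Finset.sum_congr rfl fun j _ => by ring
          simp only [hc]
          rw [hR, hS]
          ring
        -- per-index coefficient identity for v k, k < m
        have hcoef : ∀ k, k < m → α (m + 1) k / L
            = α m k / L + h (m + 1) k / L
              - μ / L * ∑ j ∈ Finset.Icc (k + 1) m, h (m + 1) j * (α j k / L) := by
          intro k hk
          rw [hα2' k hk]
          have : ∑ j ∈ Finset.Icc (k + 1) m, h (m + 1) j * (α j k / L)
              = (∑ j ∈ Finset.Icc (k + 1) m, h (m + 1) j * α j k) / L := by
            rw [Finset.sum_div]
            exact Finset.sum_congr rfl fun j _ => by ring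
          rw [this]
          ring
        -- expand the gradient sum
        have expand : ∀ j ∈ Finset.range (m + 1),
            h (m + 1) j • g j
              = h (m + 1) j • v j + (μ * h (m + 1) j * c j) • e
                - ∑ k ∈ Finset.range j, (μ * h (m + 1) j * (α j k / L)) • v k := by
          intro j hj
          have hjm : j ≤ m := by have := Finset.mem_range.mp hj; omega
          have hW : (μ * h (m + 1) j) • (∑ k ∈ Finset.range j, (α j k / L) • v k)
              = ∑ k ∈ Finset.range j, (μ * h (m + 1) j * (α j k / L)) • v k := by
            rw [Finset.smul_sum]
            exact Finset.sum_congr rfl fun k _ => smul_smul _ _ _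
          rw [hgv j, hIH j hjm, ← hW]
          module
        have hsum : ∑ j ∈ Finset.range (m + 1), h (m + 1) j • g j
            = (∑ j ∈ Finset.range (m + 1), h (m + 1) j • v j)
              + (∑ j ∈ Finset.range (m + 1), μ * h (m + 1) j * c j) • e
              - ∑ j ∈ Finset.range (m + 1), ∑ k ∈ Finset.range j,
                  (μ * h (m + 1) j * (α j k / L)) • v k := by
          rw [Finset.sum_congr rfl expand, Finset.sum_sub_distrib, Finset.sum_add_distrib,
            ← Finset.sum_smul]
        have hswap2 : ∑ j ∈ Finset.range (m + 1), ∑ k ∈ Finset.range j,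
              (μ * h (m + 1) j * (α j k / L)) • v k
            = ∑ k ∈ Finset.range m,
                (μ * ∑ j ∈ Finset.Icc (k + 1) m, h (m + 1) j * (α j k / L)) • v k := by
          rw [Finset.sum_comm' (t' := Finset.range m) (s' := fun k => Finset.Icc (k + 1) m)
            (by intro a b; simp only [Finset.mem_range, Finset.mem_Icc]; omega)]
          refine Finset.sum_congr rfl fun k _ => ?_
          rw [← Finset.sum_smul, Finset.mul_sum]
          congr 1
          exact Finset.sum_congr rfl fun j _ => by ring
        have hxm := IH m (by omega) (by omega)
        rw [hxi, hxm, hsum, hswap2]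
        have hVV : (1 / L : ℝ) • (∑ j ∈ Finset.range (m + 1), h (m + 1) j • v j)
            = ∑ j ∈ Finset.range (m + 1), (h (m + 1) j / L) • v j := by
          rw [Finset.smul_sum]
          refine Finset.sum_congr rfl fun j _ => ?_
          rw [smul_smul]
          congr 1
          ring
        have hRe : (1 / L : ℝ) • ((∑ j ∈ Finset.range (m + 1), μ * h (m + 1) j * c j) • e)
            = (μ / L * ∑ j ∈ Finset.range (m + 1), h (m + 1) j * c j) • e := by
          rw [smul_smul]
          congr 1
          rw [Finset.mul_sum, Finset.mul_sum]
          exact Finset.sum_congr rfl fun j _ => by ring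
        have hY : (1 / L : ℝ) • (∑ k ∈ Finset.range m,
              (μ * ∑ j ∈ Finset.Icc (k + 1) m, h (m + 1) j * (α j k / L)) • v k)
            = ∑ k ∈ Finset.range m,
                (μ / L * ∑ j ∈ Finset.Icc (k + 1) m, h (m + 1) j * (α j k / L)) • v k := by
          rw [Finset.smul_sum]
          refine Finset.sum_congr rfl fun k _ => ?_
          rw [smul_smul]
          congr 1
          ring
        have hsplit : (1 / L : ℝ) • ((∑ j ∈ Finset.range (m + 1), h (m + 1) j • v j)
              + (∑ j ∈ Finset.range (m + 1), μ * h (m + 1) j * c j) • e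
              - ∑ k ∈ Finset.range m,
                  (μ * ∑ j ∈ Finset.Icc (k + 1) m, h (m + 1) j * (α j k / L)) • v k)
            = (∑ j ∈ Finset.range (m + 1), (h (m + 1) j / L) • v j)
              + (μ / L * ∑ j ∈ Finset.range (m + 1), h (m + 1) j * c j) • e
              - ∑ k ∈ Finset.range m,
                  (μ / L * ∑ j ∈ Finset.Icc (k + 1) m, h (m + 1) j * (α j k / L)) • v k := by
          rw [smul_sub, smul_add, hVV, hRe, hY]
        rw [hsplit]
        have hVi : ∑ j ∈ Finset.range (m + 1), (α (m + 1) j / L) • v j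
            = (∑ k ∈ Finset.range m, (α m k / L) • v k)
              + (∑ j ∈ Finset.range (m + 1), (h (m + 1) j / L) • v j)
              - ∑ k ∈ Finset.range m,
                  (μ / L * ∑ j ∈ Finset.Icc (k + 1) m, h (m + 1) j * (α j k / L)) • v k := by
          have hstep : ∑ k ∈ Finset.range m, (α (m + 1) k / L) • v k
              = ∑ k ∈ Finset.range m, (α m k / L + h (m + 1) k / L
                  - μ / L * ∑ j ∈ Finset.Icc (k + 1) m, h (m + 1) j * (α j k / L)) • v k :=
            Finset.sum_congr rfl fun k hk => by rw [hcoef k (Finset.mem_range.mp hk)]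
          have hsplit2 : ∑ k ∈ Finset.range m, (α m k / L + h (m + 1) k / L
                  - μ / L * ∑ j ∈ Finset.Icc (k + 1) m, h (m + 1) j * (α j k / L)) • v k
              = ∑ k ∈ Finset.range m, ((α m k / L) • v k + (h (m + 1) k / L) • v k
                  - (μ / L * ∑ j ∈ Finset.Icc (k + 1) m, h (m + 1) j * (α j k / L)) • v k) :=
            Finset.sum_congr rfl fun k _ => by rw [sub_smul, add_smul]
          rw [Finset.sum_range_succ, Finset.sum_range_succ (f := fun j => (h (m + 1) j / L) • v j),
            hα1', hstep, hsplit2, Finset.sum_sub_distrib, Finset.sum_add_distrib]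
          abel
        rw [hVi, ← hA]
        module
  intro i h1 h2
  exact key i h2
end

section
/- Let L > 0 and let f : ℝ^d → ℝ be differentiable. Then f is convex with L-Lipschitz gradient if and only if for all x, y ∈ ℝ^d: f(y) ≥ f(x) + ⟨∇f(x), y − x⟩ + (1/(2L))‖∇f(x) − ∇f(y)‖². -/
open scoped RealInnerProductSpace

variable {E : Type*} [NormedAddCommGroup E] [InnerProductSpace ℝ E] [CompleteSpace E]

theorem myLineDeriv (f : E → ℝ) (hf : Differentiable ℝ f) (x v : E) (t₀ : ℝ) :
    HasDerivAt (fun t : ℝ => f (x + t • v)) ⟪gradient f (x + t₀ • v), v⟫ t₀ := by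
  have h1 : HasDerivAt (fun t : ℝ => x + t • v) v t₀ := by
    simpa using ((hasDerivAt_id t₀).smul_const v).const_add x
  have h2 := (hf (x + t₀ • v)).hasFDerivAt.comp_hasDerivAt t₀ h1
  have h := (hf (x + t₀ • v)).hasGradientAt
  rw [hasGradientAt_iff_hasFDerivAt] at h
  have h3 : fderiv ℝ f (x + t₀ • v) v = ⟪gradient f (x + t₀ • v), v⟫ := by
    rw [h.fderiv]; simp
  rwa [h3] at h2

-- Lemma B: descent lemma
theorem lemB (f : E → ℝ) (hf : Differentiable ℝ f) (L : ℝ) (hL : 0 < L)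
    (hlip : ∀ a b, ‖gradient f a - gradient f b‖ ≤ L * ‖a - b‖) (y z : E) :
    f z ≤ f y + ⟪gradient f y, z - y⟫ + L / 2 * ‖z - y‖ ^ 2 := by
  set w := z - y with hw
  set c := ⟪gradient f y, w⟫ with hc
  set φ : ℝ → ℝ := fun t => f (y + t • w) - t * c - L * ‖w‖ ^ 2 / 2 * t ^ 2 with hφ
  have hd : ∀ t : ℝ, HasDerivAt φ
      (⟪gradient f (y + t • w), w⟫ - c - L * ‖w‖ ^ 2 * t) t := by
    intro t
    have h1 := myLineDeriv f hf y w t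
    have h2 : HasDerivAt (fun t : ℝ => t * c) c t := by simpa using (hasDerivAt_id t).mul_const c
    have h3 : HasDerivAt (fun t : ℝ => L * ‖w‖ ^ 2 / 2 * t ^ 2)
        (L * ‖w‖ ^ 2 * t) t := by
      have := (hasDerivAt_pow 2 t).const_mul (L * ‖w‖ ^ 2 / 2)
      refine this.congr_deriv ?_
      push_cast
      ring
    exact (h1.sub h2).sub h3
  have hmono : AntitoneOn φ (Set.Icc 0 1) := by
    apply antitoneOn_of_deriv_nonpos (convex_Icc 0 1)
    · exact Continuous.continuousOn
        (Differentiable.continuous fun t => (hd t).differentiableAt)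
    · intro t ht
      exact ((hd t).differentiableAt).differentiableWithinAt
    · intro t ht
      rw [interior_Icc] at ht
      rw [(hd t).deriv]
      have hsub : ⟪gradient f (y + t • w), w⟫ - c = ⟪gradient f (y + t • w) - gradient f y, w⟫ := by
        rw [inner_sub_left]
      rw [hsub]
      have h4 : ⟪gradient f (y + t • w) - gradient f y, w⟫ ≤
          ‖gradient f (y + t • w) - gradient f y‖ * ‖w‖ := real_inner_le_norm _ _
      have h5 : ‖gradient f (y + t • w) - gradient f y‖ ≤ L * ‖t • w‖ := by
        have := hlip (y + t • w) y
        simpa using this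
      have h6 : ‖t • w‖ = t * ‖w‖ := by
        rw [norm_smul, Real.norm_eq_abs, abs_of_pos ht.1]
      rw [h6] at h5
      nlinarith [mul_le_mul_of_nonneg_right h5 (norm_nonneg w), h4]
  have := hmono (Set.mem_Icc.mpr ⟨le_refl 0, zero_le_one⟩)
    (Set.mem_Icc.mpr ⟨zero_le_one, le_refl 1⟩) zero_le_one
  simp only [hφ, zero_smul, add_zero, zero_mul, sub_zero, one_smul, one_mul, one_pow] at this
  have hyz : y + w = z := by rw [hw]; abel
  rw [hyz] at this
  linarith
-- Lemma A: first-order lower bound from convexity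
theorem lemA (f : E → ℝ) (hf : Differentiable ℝ f) (hc : ConvexOn ℝ Set.univ f)
    (x z : E) : f x + ⟪gradient f x, z - x⟫ ≤ f z := by
  set v := z - x with hv
  have hgd : HasDerivAt (fun t : ℝ => f (x + t • v)) ⟪gradient f x, v⟫ 0 := by
    have := myLineDeriv f hf x v 0
    simpa using this
  rw [hasDerivAt_iff_tendsto_slope] at hgd
  have hle : ∀ t ∈ Set.Ioo (0:ℝ) 1, slope (fun t : ℝ => f (x + t • v)) 0 t ≤ f z - f x := by
    intro t ht
    have hcv := hc.2 (Set.mem_univ x) (Set.mem_univ z)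
      (by linarith [ht.2] : (0:ℝ) ≤ 1 - t) (le_of_lt ht.1) (by ring)
    have hxz : (1 - t) • x + t • z = x + t • v := by
      rw [hv]; module
    rw [hxz] at hcv
    rw [slope_def_field]
    have : (f (x + t • v) - f (x + (0:ℝ) • v)) / (t - 0) ≤ f z - f x := by
      rw [sub_zero, div_le_iff₀ ht.1]
      simp only [zero_smul, add_zero, smul_eq_mul] at *
      nlinarith [ht.1]
    simpa using this
  have htend : Filter.Tendsto (slope (fun t : ℝ => f (x + t • v)) 0) (nhdsWithin 0 (Set.Ioi 0))
      (nhds ⟪gradient f x, v⟫) :=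
    hgd.mono_left (nhdsWithin_mono 0 (fun t ht => by simpa using ne_of_gt ht))
  have hbound : ∀ᶠ t in nhdsWithin (0:ℝ) (Set.Ioi 0),
      slope (fun t : ℝ => f (x + t • v)) 0 t ≤ f z - f x := by
    filter_upwards [Ioo_mem_nhdsGT_of_mem (by norm_num : (0:ℝ) ∈ Set.Ico (0:ℝ) 1)] with t ht
    exact hle t ht
  have := le_of_tendsto htend hbound
  linarith

/-- A differentiable `f : ℝ^d → ℝ` is convex with `L`-Lipschitz gradient
iff `f(y) ≥ f(x) + ⟨∇f(x), y - x⟩ + (1/(2L))‖∇f(x) - ∇f(y)‖²` for all `x, y`. -/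
theorem stmt_2 (d : ℕ) (L : ℝ) (hL : 0 < L)
    (f : EuclideanSpace ℝ (Fin d) → ℝ) (hf : Differentiable ℝ f) :
    (ConvexOn ℝ Set.univ f ∧
      (∀ x y, ‖gradient f x - gradient f y‖ ≤ L * ‖x - y‖)) ↔
    (∀ x y, f y ≥ f x + ⟪gradient f x, y - x⟫
      + 1 / (2 * L) * ‖gradient f x - gradient f y‖ ^ 2) := by
  constructor
  · rintro ⟨hc, hlip⟩ x y
    set g := gradient f x with hg
    set h := gradient f y - gradient f x with hh
    set z := y - (1 / L) • h with hz
    set N := ‖h‖ ^ 2 with hN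
    have hA : f z ≤ f y - (1/L) * ⟪gradient f y, h⟫ + L / 2 * ((1/L)^2 * N) := by
      have := lemB f hf L hL hlip y z
      have hzy : z - y = -((1/L) • h) := by rw [hz]; abel
      rw [hzy] at this
      have e1 : ⟪gradient f y, -((1/L) • h)⟫ = -((1/L) * ⟪gradient f y, h⟫) := by
        rw [inner_neg_right, real_inner_smul_right]
      have e2 : ‖-((1/L) • h)‖ ^ 2 = (1/L)^2 * N := by
        rw [norm_neg, norm_smul, mul_pow, hN]
        norm_num
      rw [e1, e2] at this
      linarith
    have hB : f x + (⟪g, y - x⟫ - (1/L) * ⟪g, h⟫) ≤ f z := by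
      have := lemA f hf hc x z
      have e3 : ⟪g, z - x⟫ = ⟪g, y - x⟫ - (1/L) * ⟪g, h⟫ := by
        have : z - x = (y - x) - (1/L) • h := by rw [hz]; abel
        rw [this, inner_sub_right, real_inner_smul_right]
      linarith [e3 ▸ this]
    have hC : ⟪gradient f y, h⟫ - ⟪g, h⟫ = N := by
      rw [hN, hh, ← inner_sub_left, real_inner_self_eq_norm_sq]
    have hnr : ‖gradient f x - gradient f y‖ = ‖h‖ := by rw [hh, norm_sub_rev]
    rw [ge_iff_le, hnr, ← hN]
    have hcoef : L / 2 * ((1/L)^2) = 1 / (2*L) := by field_simp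
    have hcoef2 : (1:ℝ)/L = 2 * (1/(2*L)) := by field_simp
    have hA' : f z ≤ f y - 1/L * ⟪gradient f y, h⟫ + 1/(2*L) * N := by
      have e : L / 2 * ((1/L)^2 * N) = 1/(2*L) * N := by rw [← mul_assoc, hcoef]
      linarith [e ▸ hA]
    have hD : 1/L * ⟪gradient f y, h⟫ - 1/L * ⟪g, h⟫ = 2 * (1/(2*L) * N) := by
      rw [← mul_sub, hC, hcoef2]; ring
    linarith [hA', hB, hD]
  · intro hineq
    have key : ∀ p q, f p + ⟪gradient f p, q - p⟫ ≤ f q := by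
      intro p q
      have h1 := hineq p q
      have h2 : 0 ≤ 1 / (2*L) * ‖gradient f p - gradient f q‖ ^ 2 := by positivity
      linarith
    constructor
    · refine ⟨convex_univ, fun x _ y _ a b ha hb hab => ?_⟩
      set z := a • x + b • y with hz
      have h1 := key z x
      have h2 := key z y
      have hzero : a • (x - z) + b • (y - z) = (0 : EuclideanSpace ℝ (Fin d)) := by
        have e : a • (x - z) + b • (y - z) = a • x + b • y - (a + b) • z := by module
        rw [e, hab, one_smul, hz, sub_self]
      have hinner : a * ⟪gradient f z, x - z⟫ + b * ⟪gradient f z, y - z⟫ = 0 := by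
        rw [← real_inner_smul_right, ← real_inner_smul_right, ← inner_add_right, hzero,
          inner_zero_right]
      have hfz : a * f z + b * f z = f z := by rw [← add_mul, hab, one_mul]
      have h1' := mul_le_mul_of_nonneg_left h1 ha
      have h2' := mul_le_mul_of_nonneg_left h2 hb
      simp only [smul_eq_mul]
      nlinarith [h1', h2']
    · intro x y
      rcases eq_or_lt_of_le (norm_nonneg (gradient f x - gradient f y)) with hg0 | hg0
      · rw [← hg0]; positivity
      · have h1 := hineq x y
        have h2 := hineq y x
        set G := gradient f x - gradient f y with hG
        have hnr : ‖gradient f y - gradient f x‖ = ‖G‖ := by rw [hG, norm_sub_rev]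
        rw [hnr] at h2
        have hip : ⟪gradient f x, y - x⟫ + ⟪gradient f y, x - y⟫ = -⟪G, x - y⟫ := by
          rw [hG, inner_sub_left]
          have : (y : EuclideanSpace ℝ (Fin d)) - x = -(x - y) := by abel
          rw [this, inner_neg_right]
          ring
        have hcs : ⟪G, x - y⟫ ≤ ‖G‖ * ‖x - y‖ := real_inner_le_norm _ _
        have hcoef : (2:ℝ) * (1/(2*L)) * L = 1 := by field_simp
        -- from h1 + h2: 0 ≥ -⟪G,x-y⟫ + 2 * (1/(2L)) * ‖G‖²
        nlinarith [h1, h2, hip, hcs, hcoef, mul_pos hL hg0, norm_nonneg (x - y)]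
end

section
/- Let I be a finite index set, let {(x_i, g_i, f_i)}_{i∈I} ⊆ ℝ^d × ℝ^d × ℝ, and let L > 0. There exists a convex, differentiable function f : ℝ^d → ℝ with L-Lipschitz gradient satisfying f(x_i) = f_i and ∇f(x_i) = g_i for all i ∈ I if and only if f_i ≥ f_j + ⟨g_j, x_i − x_j⟩ + (1/(2L))‖g_i − g_j‖² for all i, j ∈ I. -/
open scoped RealInnerProductSpace

section Aux

variable {E : Type*} [NormedAddCommGroup E] [InnerProductSpace ℝ E] [CompleteSpace E]


/-- Subgradient inequality for convex differentiable functions. -/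
lemma convex_grad_le {f : E → ℝ} {f' : E → E}
    (hf : ConvexOn ℝ Set.univ f) (hd : ∀ p, HasGradientAt f (f' p) p) (y z : E) :
    f y + ⟪f' y, z - y⟫ ≤ f z := by
  set γ : ℝ → E := fun t => y + t • (z - y) with hγdef
  have hderiv : ∀ t : ℝ, HasDerivAt (f ∘ γ) ⟪f' (γ t), z - y⟫ t := by
    intro t
    have hγ : HasDerivAt γ (z - y) t := by
      have h := ((hasDerivAt_id t).smul_const (z - y)).const_add y
      rw [one_smul] at h
      exact h
    have hfd := (hasGradientAt_iff_hasFDerivAt.1 (hd (γ t)))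
    have := hfd.comp_hasDerivAt t hγ
    simpa using this
  have hconv : ConvexOn ℝ Set.univ (f ∘ γ) := by
    have h2 := hf.comp_affineMap (AffineMap.lineMap y z : ℝ →ᵃ[ℝ] E)
    have heq : (f ∘ (AffineMap.lineMap y z : ℝ →ᵃ[ℝ] E)) = f ∘ γ := by
      funext t
      simp only [Function.comp_apply, AffineMap.lineMap_apply_module, hγdef]
      congr 1
      module
    rw [heq] at h2
    simpa using h2
  have hs := hconv.le_slope_of_hasDerivAt (Set.mem_univ (0:ℝ)) (Set.mem_univ (1:ℝ))
    zero_lt_one (hderiv 0)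
  have hγ0 : γ 0 = y := by simp [hγdef]
  have hγ1 : γ 1 = z := by simp [hγdef]
  rw [slope_def_field] at hs
  simp only [Function.comp_apply, hγ0, hγ1] at hs
  have : ⟪f' y, z - y⟫ ≤ f z - f y := by
    simpa [div_one] using hs
  linarith


/-- Descent lemma for functions with Lipschitz gradient. -/
lemma descent_lemma {f : E → ℝ} {f' : E → E} {L : ℝ} (hL : 0 < L)
    (hd : ∀ p, HasGradientAt f (f' p) p)
    (hlip : ∀ u v, ‖f' u - f' v‖ ≤ L * ‖u - v‖) (u v : E) :
    f v ≤ f u + ⟪f' u, v - u⟫ + L / 2 * ‖v - u‖ ^ 2 := by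
  set γ : ℝ → E := fun t => u + t • (v - u) with hγdef
  set ψ : ℝ → ℝ := fun t => f (γ t) - t * ⟪f' u, v - u⟫ - L * t ^ 2 / 2 * ‖v - u‖ ^ 2
    with hψdef
  have hderiv : ∀ t : ℝ, HasDerivAt ψ
      (⟪f' (γ t), v - u⟫ - ⟪f' u, v - u⟫ - L * t * ‖v - u‖ ^ 2) t := by
    intro t
    have hγ : HasDerivAt γ (v - u) t := by
      have h := ((hasDerivAt_id t).smul_const (v - u)).const_add u
      rw [one_smul] at h
      exact h
    have h1 : HasDerivAt (fun t => f (γ t)) ⟪f' (γ t), v - u⟫ t := by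
      have hfd := (hasGradientAt_iff_hasFDerivAt.1 (hd (γ t)))
      have h := hfd.comp_hasDerivAt t hγ
      simp at h
      exact h
    have h2 : HasDerivAt (fun t : ℝ => t * ⟪f' u, v - u⟫) ⟪f' u, v - u⟫ t := by
      simpa using (hasDerivAt_id t).mul_const ⟪f' u, v - u⟫
    have h3 : HasDerivAt (fun t : ℝ => L * t ^ 2 / 2 * ‖v - u‖ ^ 2)
        (L * t * ‖v - u‖ ^ 2) t := by
      have : HasDerivAt (fun t : ℝ => t ^ 2) (2 * t) t := by
        simpa using hasDerivAt_pow 2 t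
      have := ((this.const_mul L).div_const 2).mul_const (‖v - u‖ ^ 2)
      rw [show L * t * ‖v - u‖ ^ 2 = L * (2 * t) / 2 * ‖v - u‖ ^ 2 by ring]
      exact this
    exact (h1.sub h2).sub h3
  have hanti : AntitoneOn ψ (Set.Icc 0 1) := by
    apply antitoneOn_of_deriv_nonpos (convex_Icc 0 1)
    · exact Continuous.continuousOn (by
        have : ∀ t, DifferentiableAt ℝ ψ t := fun t => (hderiv t).differentiableAt
        exact (Differentiable.continuous this))
    · intro t _
      exact (hderiv t).differentiableAt.differentiableWithinAt
    · intro t ht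
      rw [interior_Icc] at ht
      rw [(hderiv t).deriv]
      have hineq : ⟪f' (γ t) - f' u, v - u⟫ ≤ L * t * ‖v - u‖ ^ 2 := by
        calc ⟪f' (γ t) - f' u, v - u⟫ ≤ ‖f' (γ t) - f' u‖ * ‖v - u‖ :=
              real_inner_le_norm _ _
          _ ≤ (L * ‖γ t - u‖) * ‖v - u‖ := by
              apply mul_le_mul_of_nonneg_right (hlip _ _) (norm_nonneg _)
          _ = L * t * ‖v - u‖ ^ 2 := by
              have : γ t - u = t • (v - u) := by simp [hγdef]
              rw [this, norm_smul]
              simp [abs_of_nonneg (le_of_lt ht.1)]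
              ring
      rw [inner_sub_left] at hineq
      linarith
  have key := hanti (Set.mem_Icc.2 ⟨le_refl 0, zero_le_one⟩)
    (Set.mem_Icc.2 ⟨zero_le_one, le_refl 1⟩) zero_le_one
  have hγ0 : γ 0 = u := by simp [hγdef]
  have hγ1 : γ 1 = v := by simp [hγdef]
  simp only [hψdef, hγ0, hγ1] at key
  nlinarith [key]

lemma cocoercive {f : E → ℝ} {f' : E → E} {L : ℝ} (hL : 0 < L)
    (hf : ConvexOn ℝ Set.univ f) (hd : ∀ p, HasGradientAt f (f' p) p)
    (hlip : ∀ u v, ‖f' u - f' v‖ ≤ L * ‖u - v‖) (a b : E) :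
    f b + ⟪f' b, a - b⟫ + 1 / (2 * L) * ‖f' a - f' b‖ ^ 2 ≤ f a := by
  set Δ : E := f' a - f' b with hΔ
  set w : E := a - L⁻¹ • Δ with hw
  have h1 := convex_grad_le hf hd b w
  have h2 := descent_lemma hL hd hlip a w
  have e1 : ⟪f' b, w - b⟫ = ⟪f' b, a - b⟫ - L⁻¹ * ⟪f' b, Δ⟫ := by
    have : w - b = (a - b) - L⁻¹ • Δ := by rw [hw]; abel
    rw [this, inner_sub_right, real_inner_smul_right]
  have e2 : ⟪f' a, w - a⟫ = -(L⁻¹ * ⟪f' a, Δ⟫) := by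
    have : w - a = -(L⁻¹ • Δ) := by rw [hw]; abel
    rw [this, inner_neg_right, real_inner_smul_right]
  have e3 : ‖w - a‖ ^ 2 = L⁻¹ ^ 2 * ‖Δ‖ ^ 2 := by
    have : w - a = -(L⁻¹ • Δ) := by rw [hw]; abel
    rw [this, norm_neg, norm_smul, mul_pow]
    simp [abs_of_pos (inv_pos.2 hL)]
  have e4 : ⟪f' a, Δ⟫ - ⟪f' b, Δ⟫ = ‖Δ‖ ^ 2 := by
    rw [← inner_sub_left, ← hΔ, real_inner_self_eq_norm_sq]
  rw [e1] at h1
  rw [e2, e3] at h2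
  have hL' : L ≠ 0 := ne_of_gt hL
  have key : f b + ⟪f' b, a - b⟫ + (L⁻¹ * ⟪f' a, Δ⟫ - L⁻¹ * ⟪f' b, Δ⟫)
      - L / 2 * (L⁻¹ ^ 2 * ‖Δ‖ ^ 2) ≤ f a := by linarith
  have : L⁻¹ * ⟪f' a, Δ⟫ - L⁻¹ * ⟪f' b, Δ⟫ = L⁻¹ * ‖Δ‖ ^ 2 := by
    rw [← mul_sub, e4]
  rw [this] at key
  have : L⁻¹ * ‖Δ‖ ^ 2 - L / 2 * (L⁻¹ ^ 2 * ‖Δ‖ ^ 2) = 1 / (2 * L) * ‖Δ‖ ^ 2 := by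
    field_simp; ring
  linarith [key, this]

end Aux

section Moreau

variable {E : Type*} [NormedAddCommGroup E] [InnerProductSpace ℝ E] [FiniteDimensional ℝ E]


lemma exists_prox {L : ℝ} (hL : 0 < L) (m : E → ℝ) (hm : Continuous m)
    {G : ℝ} (hG : 0 ≤ G) (hlb : ∀ y z : E, m z - G * ‖y - z‖ ≤ m y) (u : E) :
    ∃ p : E, ∀ y : E, m p + L / 2 * ‖u - p‖ ^ 2 ≤ m y + L / 2 * ‖u - y‖ ^ 2 := by
  set φ : E → ℝ := fun y => m y + L / 2 * ‖u - y‖ ^ 2 with hφ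
  have hφc : Continuous φ := by
    apply hm.add
    exact continuous_const.mul (((continuous_const.sub continuous_id).norm.pow 2))
  set R : ℝ := 2 * G / L with hR
  have hR0 : 0 ≤ R := by positivity
  obtain ⟨p, hpmem, hpmin⟩ := (isCompact_closedBall u R).exists_isMinOn
    ⟨u, Metric.mem_closedBall_self hR0⟩ hφc.continuousOn
  refine ⟨p, fun y => ?_⟩
  by_cases hy : y ∈ Metric.closedBall u R
  · exact hpmin hy
  · -- outside the ball : φ y ≥ φ u ≥ φ p
    have hr : R < ‖y - u‖ := by
      simpa [Metric.mem_closedBall, dist_eq_norm] using hy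
    have h1 : m u - G * ‖y - u‖ ≤ m y := hlb y u
    have h2 : φ u ≤ φ y := by
      have hnorm : ‖u - y‖ = ‖y - u‖ := norm_sub_rev _ _
      have hquad : G * ‖y - u‖ ≤ L / 2 * ‖y - u‖ ^ 2 := by
        have h3 : 2 * G / L ≤ ‖y - u‖ := le_of_lt hr
        have h4 : 2 * G ≤ L * ‖y - u‖ := by
          rw [div_le_iff₀ hL] at h3; linarith
        nlinarith [norm_nonneg (y - u)]
      simp only [hφ, hnorm, sub_self, norm_zero]
      nlinarith
    exact le_trans (hpmin (Metric.mem_closedBall_self hR0)) h2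


lemma prox_subgrad {L : ℝ} (hL : 0 < L) {m : E → ℝ}
    (hconv : ∀ a b : E, ∀ t : ℝ, 0 ≤ t → t ≤ 1 →
      m ((1 - t) • a + t • b) ≤ (1 - t) * m a + t * m b)
    {u p : E} (hmin : ∀ y : E, m p + L / 2 * ‖u - p‖ ^ 2 ≤ m y + L / 2 * ‖u - y‖ ^ 2)
    (z : E) : m p + L * ⟪u - p, z - p⟫ ≤ m z := by
  have key : ∀ t ∈ Set.Ioc (0:ℝ) 1,
      L * ⟪u - p, z - p⟫ ≤ m z - m p + L * t / 2 * ‖z - p‖ ^ 2 := by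
    rintro t ⟨ht0, ht1⟩
    set yt : E := (1 - t) • p + t • z with hyt
    have hA := hmin yt
    have hB := hconv p z t (le_of_lt ht0) ht1
    have hC : ‖u - yt‖ ^ 2 = ‖u - p‖ ^ 2 - 2 * t * ⟪u - p, z - p⟫ + t ^ 2 * ‖z - p‖ ^ 2 := by
      have h1 : u - yt = (u - p) - t • (z - p) := by
        rw [hyt]; rw [sub_smul, one_smul, smul_sub]; abel
      rw [h1, norm_sub_sq_real, real_inner_smul_right, norm_smul]
      rw [Real.norm_eq_abs, abs_of_pos ht0, mul_pow]
      ring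
    rw [← hyt] at hB
    rw [hC] at hA
    have h5 : t * (L * ⟪u - p, z - p⟫) ≤ t * (m z - m p + L * t / 2 * ‖z - p‖ ^ 2) := by
      nlinarith
    exact le_of_mul_le_mul_left h5 ht0
  have tend : Filter.Tendsto (fun t : ℝ => m z - m p + L * t / 2 * ‖z - p‖ ^ 2)
      (nhdsWithin 0 (Set.Ioi 0)) (nhds (m z - m p)) := by
    have hc : Continuous (fun t : ℝ => m z - m p + L * t / 2 * ‖z - p‖ ^ 2) := by
      continuity
    have := (hc.tendsto 0).mono_left (nhdsWithin_le_nhds (s := Set.Ioi (0:ℝ)))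
    simpa using this
  have hev : ∀ᶠ t in nhdsWithin (0:ℝ) (Set.Ioi 0),
      L * ⟪u - p, z - p⟫ ≤ m z - m p + L * t / 2 * ‖z - p‖ ^ 2 := by
    filter_upwards [Ioc_mem_nhdsGT_of_mem (Set.mem_Ico.2 ⟨le_refl (0:ℝ), zero_lt_one⟩)]
      with t ht
    exact key t ht
  have := ge_of_tendsto tend hev
  linarith

lemma moreau_env {L : ℝ} (hL : 0 < L) (m : E → ℝ) (hm : Continuous m)
    (hconv : ∀ a b : E, ∀ t : ℝ, 0 ≤ t → t ≤ 1 →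
      m ((1 - t) • a + t • b) ≤ (1 - t) * m a + t * m b)
    {G : ℝ} (hG : 0 ≤ G) (hlb : ∀ y z : E, m z - G * ‖y - z‖ ≤ m y) :
    ∃ (f : E → ℝ) (p : E → E),
      (∀ u y, f u ≤ m y + L / 2 * ‖u - y‖ ^ 2) ∧
      (∀ u, f u = m (p u) + L / 2 * ‖u - p u‖ ^ 2) ∧
      (∀ u, HasGradientAt f (L • (u - p u)) u) ∧
      (∀ u v, ‖L • (u - p u) - L • (v - p v)‖ ≤ L * ‖u - v‖) ∧
      ConvexOn ℝ Set.univ f := by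
  choose p hp using fun u => exists_prox hL m hm hG hlb u
  set f : E → ℝ := fun u => m (p u) + L / 2 * ‖u - p u‖ ^ 2 with hf
  set v : E → E := fun u => L • (u - p u) with hv
  have hmin : ∀ u y, f u ≤ m y + L / 2 * ‖u - y‖ ^ 2 := fun u y => hp u y
  -- firm nonexpansiveness
  have hfirm : ∀ u w : E, ‖p u - p w‖ ^ 2 ≤ ⟪u - w, p u - p w⟫ := by
    intro u w
    have h1 := prox_subgrad hL hconv (hp u) (p w)
    have h2 := prox_subgrad hL hconv (hp w) (p u)
    have h3 : L * ⟪u - p u, p w - p u⟫ + L * ⟪w - p w, p u - p w⟫ ≤ 0 := by linarith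
    have h4 : ⟪u - p u, p w - p u⟫ = - ⟪u - p u, p u - p w⟫ := by
      rw [← inner_neg_right]; congr 1; abel
    rw [h4] at h3
    have h5 : ⟪w - p w, p u - p w⟫ - ⟪u - p u, p u - p w⟫ ≤ 0 := by
      have := (mul_nonpos_iff.1 (by linarith : L * (⟪w - p w, p u - p w⟫ - ⟪u - p u, p u - p w⟫) ≤ 0))
      rcases this with ⟨hL2, h⟩ | ⟨hL2, h⟩
      · exact h
      · linarith
    have h6 : ⟪(u - p u) - (w - p w), p u - p w⟫ ≥ 0 := by
      rw [inner_sub_left]; linarith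
    have h7 : (u - p u) - (w - p w) = (u - w) - (p u - p w) := by abel
    rw [h7, inner_sub_left, real_inner_self_eq_norm_sq] at h6
    linarith
  -- Lipschitz property of v
  have hlip : ∀ u w : E, ‖v u - v w‖ ≤ L * ‖u - w‖ := by
    intro u w
    have h1 : v u - v w = L • ((u - w) - (p u - p w)) := by
      simp only [hv, ← smul_sub]; congr 1; abel
    rw [h1, norm_smul, Real.norm_eq_abs, abs_of_pos hL]
    have h2 : ‖(u - w) - (p u - p w)‖ ^ 2 ≤ ‖u - w‖ ^ 2 := by
      rw [norm_sub_sq_real]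
      have := hfirm u w
      nlinarith [norm_nonneg (p u - p w)]
    have h2' : ‖(u - w) - (p u - p w)‖ ≤ ‖u - w‖ := by
      nlinarith [norm_nonneg ((u - w) - (p u - p w)), norm_nonneg (u - w)]
    exact mul_le_mul_of_nonneg_left h2' (le_of_lt hL)
  -- upper quadratic bound
  have hub : ∀ u w : E, f w ≤ f u + ⟪v u, w - u⟫ + L / 2 * ‖w - u‖ ^ 2 := by
    intro u w
    have h1 := hmin w (p u)
    have h2 : ‖w - p u‖ ^ 2 = ‖u - p u‖ ^ 2 + 2 * ⟪u - p u, w - u⟫ + ‖w - u‖ ^ 2 := by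
      have h3 : w - p u = (u - p u) + (w - u) := by abel
      rw [h3, norm_add_sq_real]
    have h4 : ⟪v u, w - u⟫ = L * ⟪u - p u, w - u⟫ := by
      simp only [hv]; rw [real_inner_smul_left]
    rw [hf] at *
    simp only at h1 ⊢
    rw [h2] at h1
    rw [h4]
    linarith
  -- gradient
  have hgrad : ∀ u : E, HasGradientAt f (v u) u := by
    intro u
    rw [hasGradientAt_iff_isLittleO]
    have hbound : ∀ w : E, ‖f w - f u - ⟪v u, w - u⟫‖ ≤ 3 * L / 2 * ‖w - u‖ ^ 2 := by
      intro w
      have h1 := hub u w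
      have h2 := hub w u
      have h3 : ⟪v w, u - w⟫ = - ⟪v w, w - u⟫ := by
        rw [← inner_neg_right]; congr 1; abel
      rw [h3] at h2
      have h4 : ‖u - w‖ = ‖w - u‖ := norm_sub_rev _ _
      rw [h4] at h2
      have h5 : ⟪v w - v u, w - u⟫ ≤ ‖v w - v u‖ * ‖w - u‖ := real_inner_le_norm _ _
      have h6 : ‖v w - v u‖ * ‖w - u‖ ≤ (L * ‖w - u‖) * ‖w - u‖ :=
        mul_le_mul_of_nonneg_right (hlip w u) (norm_nonneg _)
      rw [inner_sub_left] at h5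
      have h5b : inner ℝ (v u) (w - u) - inner ℝ (v w) (w - u) ≤ ‖v w - v u‖ * ‖w - u‖ := by
        have := real_inner_le_norm (v u - v w) (w - u)
        rw [inner_sub_left] at this
        rwa [norm_sub_rev] at this
      rw [Real.norm_eq_abs, abs_le]
      constructor
      · nlinarith
      · nlinarith
    rw [Asymptotics.isLittleO_iff]
    intro c hc
    have hball : Metric.ball u (c / (3 * L / 2)) ∈ nhds u :=
      Metric.ball_mem_nhds u (by positivity)
    filter_upwards [hball] with w hw
    have hdist : ‖w - u‖ < c / (3 * L / 2) := by
      rwa [Metric.mem_ball, dist_eq_norm] at hw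
    calc ‖f w - f u - ⟪v u, w - u⟫‖ ≤ 3 * L / 2 * ‖w - u‖ ^ 2 := hbound w
      _ = (3 * L / 2 * ‖w - u‖) * ‖w - u‖ := by ring
      _ ≤ c * ‖w - u‖ := by
          apply mul_le_mul_of_nonneg_right _ (norm_nonneg _)
          rw [lt_div_iff₀ (by positivity)] at hdist
          nlinarith
  -- convexity
  have hcvx : ConvexOn ℝ Set.univ f := by
    refine ⟨convex_univ, fun a _ b _ s t hs ht hst => ?_⟩
    have h1 := hmin (s • a + t • b) (s • p a + t • p b)
    have h2 : (s • a + t • b) - (s • p a + t • p b) = s • (a - p a) + t • (b - p b) := by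
      rw [smul_sub, smul_sub]; abel
    have h3 : ‖s • (a - p a) + t • (b - p b)‖ ^ 2 ≤ s * ‖a - p a‖ ^ 2 + t * ‖b - p b‖ ^ 2 := by
      have h4 : ‖s • (a - p a) + t • (b - p b)‖ ≤ s * ‖a - p a‖ + t * ‖b - p b‖ := by
        calc ‖s • (a - p a) + t • (b - p b)‖ ≤ ‖s • (a - p a)‖ + ‖t • (b - p b)‖ :=
              norm_add_le _ _
          _ = s * ‖a - p a‖ + t * ‖b - p b‖ := by
              rw [norm_smul, norm_smul, Real.norm_eq_abs, Real.norm_eq_abs,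
                abs_of_nonneg hs, abs_of_nonneg ht]
      nlinarith [norm_nonneg (s • (a - p a) + t • (b - p b)), norm_nonneg (a - p a),
        norm_nonneg (b - p b), mul_nonneg (mul_nonneg hs ht)
          (sq_nonneg (‖a - p a‖ - ‖b - p b‖)),
        mul_nonneg hs (norm_nonneg (a - p a)), mul_nonneg ht (norm_nonneg (b - p b))]
    have h5 : m (s • p a + t • p b) ≤ s * m (p a) + t * m (p b) := by
      have ht1 : t ≤ 1 := by linarith
      have h := hconv (p a) (p b) t ht ht1
      rw [show (1:ℝ) - t = s by linarith] at h
      exact h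
    rw [h2] at h1
    have h6 := mul_le_mul_of_nonneg_left h3 (by positivity : (0:ℝ) ≤ L / 2)
    simp only [hf, smul_eq_mul] at h1 ⊢
    nlinarith [h1, h5, h6]
  exact ⟨f, p, hmin, fun u => rfl, hgrad, hlip, hcvx⟩

end Moreau

/-- `F_{0,L}`-interpolation. A finite data set `{(x_i, g_i, f_i)}_{i ∈ I}`
is interpolable by a convex differentiable function with `L`-Lipschitz gradient iff
`f_i ≥ f_j + ⟨g_j, x_i - x_j⟩ + (1/(2L))‖g_i - g_j‖²` for all `i, j ∈ I`. -/
theorem stmt_3 (d : ℕ) (ι : Type) [Fintype ι] (L : ℝ) (hL : 0 < L)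
    (x g : ι → EuclideanSpace ℝ (Fin d)) (fv : ι → ℝ) :
    (∃ f : EuclideanSpace ℝ (Fin d) → ℝ,
      ConvexOn ℝ Set.univ f ∧ Differentiable ℝ f ∧
      (∀ u v, ‖gradient f u - gradient f v‖ ≤ L * ‖u - v‖) ∧
      (∀ i, f (x i) = fv i ∧ gradient f (x i) = g i)) ↔
    (∀ i j, fv i ≥ fv j + ⟪g j, x i - x j⟫ + 1 / (2 * L) * ‖g i - g j‖ ^ 2) := by
  constructor
  · rintro ⟨f, hcvx, hdiff, hlip, hint⟩ i j
    have hd : ∀ p, HasGradientAt f (gradient f p) p :=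
      fun p => (hdiff p).hasGradientAt
    have := cocoercive hL hcvx hd hlip (x i) (x j)
    rw [(hint i).1, (hint j).1, (hint i).2, (hint j).2] at this
    linarith
  · intro hyp
    by_cases hι : Nonempty ι
    · -- nonempty case : Moreau envelope construction
      have hne : (Finset.univ : Finset ι).Nonempty := Finset.univ_nonempty
      set piece : ι → EuclideanSpace ℝ (Fin d) → ℝ :=
        fun j y => fv j + ⟪g j, y - x j⟫ + ‖g j‖ ^ 2 / (2 * L) with hpiece
      set m : EuclideanSpace ℝ (Fin d) → ℝ :=
        fun y => Finset.univ.sup' hne (fun j => piece j y) with hmdef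
      have hm : Continuous m := by
        rw [continuous_iff_continuousAt]
        intro y
        apply ContinuousAt.finset_sup'_apply hne
        intro j _
        apply Continuous.continuousAt
        exact (continuous_const.add
          ((continuous_const.inner (continuous_id.sub continuous_const)))).add
          continuous_const
      have hpiece_le : ∀ (j : ι) (y : EuclideanSpace ℝ (Fin d)), piece j y ≤ m y := by
        intro j y
        exact Finset.le_sup' (fun j => piece j y) (Finset.mem_univ j)
      have hconv : ∀ a b : EuclideanSpace ℝ (Fin d), ∀ t : ℝ, 0 ≤ t → t ≤ 1 →
          m ((1 - t) • a + t • b) ≤ (1 - t) * m a + t * m b := by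
        intro a b t ht0 ht1
        apply Finset.sup'_le
        intro j _
        have haff : piece j ((1 - t) • a + t • b)
            = (1 - t) * piece j a + t * piece j b := by
          simp only [hpiece]
          have hsplit : (1 - t) • a + t • b - x j
              = (1 - t) • (a - x j) + t • (b - x j) := by
            rw [smul_sub, smul_sub]
            rw [show (1 - t) • a + t • b - x j
              = (1 - t) • a + t • b - ((1-t) • x j + t • x j) by
                rw [← add_smul]; norm_num]
            abel
          rw [hsplit, inner_add_right, real_inner_smul_right, real_inner_smul_right]
          ring
        rw [haff]
        have h1 := hpiece_le j a
        have h2 := hpiece_le j b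
        have := mul_le_mul_of_nonneg_left h1 (by linarith : (0:ℝ) ≤ 1 - t)
        have := mul_le_mul_of_nonneg_left h2 ht0
        linarith
      set G : ℝ := Finset.univ.sup' hne (fun j => ‖g j‖) with hGdef
      obtain ⟨j0⟩ := hι
      have hG : 0 ≤ G := by
        rw [hGdef]
        exact le_trans (norm_nonneg (g j0))
          (Finset.le_sup' (fun j => ‖g j‖) (Finset.mem_univ j0))
      have hlb : ∀ y z : EuclideanSpace ℝ (Fin d), m z - G * ‖y - z‖ ≤ m y := by
        intro y z
        obtain ⟨j, _, hj⟩ := Finset.exists_mem_eq_sup' hne (fun j => piece j z)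
        have h1 : piece j y ≤ m y := hpiece_le j y
        have h2 : piece j z - piece j y = ⟪g j, z - y⟫ := by
          simp only [hpiece]
          rw [show z - x j = (y - x j) + (z - y) by abel, inner_add_right]
          ring
        have h3 : ⟪g j, z - y⟫ ≤ ‖g j‖ * ‖z - y‖ := real_inner_le_norm _ _
        have h4 : ‖g j‖ ≤ G := by
          rw [hGdef]
          exact Finset.le_sup' (fun j => ‖g j‖) (Finset.mem_univ j)
        have h5 : ‖g j‖ * ‖z - y‖ ≤ G * ‖y - z‖ := by
          rw [norm_sub_rev z y]
          exact mul_le_mul_of_nonneg_right h4 (norm_nonneg _)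
        have : m z = piece j z := hj
        linarith
      obtain ⟨f, p, hmin, hfeq, hgrad, hlipv, hcvx⟩ := moreau_env hL m hm hconv hG hlb
      have hinterp : ∀ i, f (x i) = fv i ∧ p (x i) = x i - L⁻¹ • g i := by
        intro i
        set yi : EuclideanSpace ℝ (Fin d) := x i - L⁻¹ • g i with hyi
        -- upper bound
        have hupper : f (x i) ≤ fv i := by
          have hm_yi : m yi ≤ fv i - ‖g i‖ ^ 2 / (2 * L) := by
            apply Finset.sup'_le
            intro j _
            have hexp : ⟪g j, yi - x j⟫
                = ⟪g j, x i - x j⟫ - L⁻¹ * ⟪g j, g i⟫ := by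
              rw [show yi - x j = (x i - x j) - L⁻¹ • g i by rw [hyi]; abel,
                inner_sub_right, real_inner_smul_right]
            have hnorm : 1 / (2 * L) * ‖g i - g j‖ ^ 2
                = ‖g i‖ ^ 2 / (2 * L) + ‖g j‖ ^ 2 / (2 * L) - L⁻¹ * ⟪g i, g j⟫ := by
              rw [norm_sub_sq_real]
              field_simp
              ring
            have := hyp i j
            have hcomm : L⁻¹ * ⟪g j, g i⟫ = L⁻¹ * ⟪g i, g j⟫ := by
              rw [real_inner_comm]
            simp only [hpiece]
            rw [hexp]
            linarith [this, hnorm, hcomm]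
          have hdist : L / 2 * ‖x i - yi‖ ^ 2 = ‖g i‖ ^ 2 / (2 * L) := by
            rw [show x i - yi = L⁻¹ • g i by rw [hyi]; abel, norm_smul,
              Real.norm_eq_abs, abs_of_pos (inv_pos.2 hL), mul_pow]
            field_simp
          calc f (x i) ≤ m yi + L / 2 * ‖x i - yi‖ ^ 2 := hmin (x i) yi
            _ ≤ fv i - ‖g i‖ ^ 2 / (2 * L) + ‖g i‖ ^ 2 / (2 * L) := by
                rw [hdist]; linarith
            _ = fv i := by ring
        -- lower bound with complete square
        have hsquare : ∀ q : EuclideanSpace ℝ (Fin d),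
            piece i q + L / 2 * ‖x i - q‖ ^ 2 = fv i + L / 2 * ‖q - yi‖ ^ 2 := by
          intro q
          have h1 : q - yi = (q - x i) + L⁻¹ • g i := by rw [hyi]; abel
          rw [h1, norm_add_sq_real, real_inner_smul_right, norm_smul,
            Real.norm_eq_abs, abs_of_pos (inv_pos.2 hL), mul_pow]
          simp only [hpiece]
          rw [show ⟪g i, q - x i⟫ = ⟪q - x i, g i⟫ from real_inner_comm _ _,
            norm_sub_rev (x i) q]
          field_simp
          ring
        have hlower : fv i + L / 2 * ‖p (x i) - yi‖ ^ 2 ≤ f (x i) := by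
          rw [hfeq (x i)]
          calc fv i + L / 2 * ‖p (x i) - yi‖ ^ 2
              = piece i (p (x i)) + L / 2 * ‖x i - p (x i)‖ ^ 2 :=
                (hsquare (p (x i))).symm
            _ ≤ m (p (x i)) + L / 2 * ‖x i - p (x i)‖ ^ 2 :=
                add_le_add_left (hpiece_le i (p (x i))) _
        have hnn : 0 ≤ L / 2 * ‖p (x i) - yi‖ ^ 2 := by positivity
        have hfe : f (x i) = fv i := le_antisymm hupper (by linarith)
        have hzero : ‖p (x i) - yi‖ ^ 2 = 0 := by nlinarith
        have hpyi : p (x i) = yi := by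
          have := pow_eq_zero_iff (n := 2) (by norm_num) |>.1 hzero
          rwa [norm_eq_zero, sub_eq_zero] at this
        exact ⟨hfe, hpyi⟩
      refine ⟨f, hcvx, fun u => (hgrad u).differentiableAt, ?_, ?_⟩
      · intro u v
        rw [(hgrad u).gradient, (hgrad v).gradient]
        exact hlipv u v
      · intro i
        obtain ⟨hfe, hpe⟩ := hinterp i
        refine ⟨hfe, ?_⟩
        rw [(hgrad (x i)).gradient, hpe]
        rw [show x i - (x i - L⁻¹ • g i) = L⁻¹ • g i by abel, smul_smul,
          mul_inv_cancel₀ (ne_of_gt hL), one_smul]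
    · -- empty case : take f = 0
      have hgrad0 : ∀ u : EuclideanSpace ℝ (Fin d),
          HasGradientAt (fun _ : EuclideanSpace ℝ (Fin d) => (0:ℝ)) 0 u := by
        intro u
        rw [hasGradientAt_iff_hasFDerivAt]
        simpa using hasFDerivAt_const (0:ℝ) u
      refine ⟨fun _ => 0, convexOn_const 0 convex_univ,
        fun u => ((hgrad0 u).differentiableAt), ?_, ?_⟩
      · intro u v
        rw [(hgrad0 u).gradient, (hgrad0 v).gradient]
        simp
        positivity
      · intro i
        exact absurd ⟨i⟩ hι
end

section
/- Let I be a finite index set, let {(x_i, g_i, f_i)}_{i∈I∪{⋆}} ⊆ ℝ^d × ℝ^d × ℝ, and let L > 0. There exists a differentiable function f : ℝ^d → ℝ with L-Lipschitz gradient satisfying f(x) ≥ f(x⋆) = f⋆ for all x ∈ ℝ^d, f(x_i) = f_i and ∇f(x_i) = g_i for all i ∈ I, and ∇f(x⋆) = g⋆, if and only if the following three conditions hold: (1) f_i ≥ f_j − (L/4)‖x_i − x_j‖² + (1/2)⟨g_i + g_j, x_i − x_j⟩ + (1/(4L))‖g_i − g_j‖² for all i, j ∈ I ∪ {⋆}; (2)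 f⋆ ≤ f_i − (1/(2L))‖g_i‖² for all i ∈ I; and (3) g⋆ = 0. -/
open scoped RealInnerProductSpace
open Filter

set_option maxHeartbeats 1000000

section All


variable {E : Type*} [NormedAddCommGroup E] [InnerProductSpace ℝ E] [CompleteSpace E]


private lemma combo_sq (a b : E) (t : ℝ) :
    ‖t • a + (1 - t) • b‖ ^ 2
      = t * ‖a‖ ^ 2 + (1 - t) * ‖b‖ ^ 2 - t * (1 - t) * ‖a - b‖ ^ 2 := by
  rw [norm_add_sq_real]
  simp only [norm_smul, Real.norm_eq_abs, mul_pow, sq_abs, real_inner_smul_left,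
    real_inner_smul_right, norm_sub_sq_real]
  ring

private lemma cont_sup' {κ : Type*} {X : Type*} [TopologicalSpace X]
    (s : Finset κ) (hs : s.Nonempty) (F : κ → X → ℝ) (hF : ∀ k, Continuous (F k)) :
    Continuous fun u => s.sup' hs fun k => F k u := by
  induction hs using Finset.Nonempty.cons_induction with
  | singleton a => simp only [Finset.sup'_singleton]; exact hF a
  | cons a s ha hs ih => simp only [Finset.sup'_cons hs]; exact (hF a).max ih

private lemma descent {f : E → ℝ} {L : ℝ} (hL : 0 ≤ L) (hf : Differentiable ℝ f)
    (hLip : ∀ u v, ‖gradient f u - gradient f v‖ ≤ L * ‖u - v‖)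
    (x y : E) : |f y - f x - ⟪gradient f x, y - x⟫| ≤ L / 2 * ‖y - x‖ ^ 2 := by
  set v := y - x with hv
  have hline : ∀ t : ℝ, HasDerivAt (fun s : ℝ => f (x + s • v)) ⟪gradient f (x + t • v), v⟫ t := by
    intro t
    have h2 : HasDerivAt (fun s : ℝ => x + s • v) v t := by
      simpa using ((hasDerivAt_id t).smul_const v).const_add x
    have h3 := (hf (x + t • v)).hasFDerivAt.comp_hasDerivAt t h2
    refine h3.congr_deriv ?_
    simp [gradient, InnerProductSpace.toDual_symm_apply]
  set F : ℝ → ℝ := fun t => f (x + t • v) - f x - t * ⟪gradient f x, v⟫ with hF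
  have hF' : ∀ t : ℝ, HasDerivAt F (⟪gradient f (x + t • v) - gradient f x, v⟫) t := by
    intro t
    have h2 := ((hline t).sub_const (f x)).sub ((hasDerivAt_id t).mul_const ⟪gradient f x, v⟫)
    refine h2.congr_deriv ?_
    rw [inner_sub_left]; ring
  have hB : ∀ t : ℝ, HasDerivAt (fun t : ℝ => L / 2 * ‖v‖ ^ 2 * t ^ 2) (L * ‖v‖ ^ 2 * t) t := by
    intro t
    have := (hasDerivAt_pow 2 t).const_mul (L / 2 * ‖v‖ ^ 2)
    refine this.congr_deriv ?_
    push_cast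
    ring
  have key : ∀ t ∈ Set.Icc (0:ℝ) 1, ‖F t‖ ≤ L / 2 * ‖v‖ ^ 2 * t ^ 2 := by
    apply image_norm_le_of_norm_deriv_right_le_deriv_boundary
      (f' := fun t => ⟪gradient f (x + t • v) - gradient f x, v⟫)
      (B' := fun t => L * ‖v‖ ^ 2 * t)
      (fun t _ => ((hF' t).continuousAt).continuousWithinAt)
      (fun t _ => (hF' t).hasDerivWithinAt)
      (by simp [hF]) hB
    intro t ht
    have h1 : |⟪gradient f (x + t • v) - gradient f x, v⟫|
        ≤ ‖gradient f (x + t • v) - gradient f x‖ * ‖v‖ := abs_real_inner_le_norm _ _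
    have h2 := hLip (x + t • v) x
    have h3 : ‖x + t • v - x‖ = t * ‖v‖ := by
      simp [norm_smul, abs_of_nonneg ht.1]
    rw [h3] at h2
    have h4 : ‖gradient f (x + t • v) - gradient f x‖ * ‖v‖ ≤ L * (t * ‖v‖) * ‖v‖ :=
      mul_le_mul_of_nonneg_right h2 (norm_nonneg _)
    rw [Real.norm_eq_abs]
    calc |⟪gradient f (x + t • v) - gradient f x, v⟫| ≤ L * (t * ‖v‖) * ‖v‖ := h1.trans h4
      _ = L * ‖v‖ ^ 2 * t := by ring
  have h1 := key 1 ⟨zero_le_one, le_refl 1⟩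
  have h2 : x + (1:ℝ) • v = y := by simp [hv]
  rw [Real.norm_eq_abs] at h1
  simp only [hF, h2, one_mul, one_pow, mul_one] at h1
  exact h1



private lemma combo_sq' (a b : E) (t : ℝ) :
    ‖t • a + (1 - t) • b‖ ^ 2
      = t * ‖a‖ ^ 2 + (1 - t) * ‖b‖ ^ 2 - t * (1 - t) * ‖a - b‖ ^ 2 := by
  rw [norm_add_sq_real]
  simp only [norm_smul, Real.norm_eq_abs, mul_pow, sq_abs, real_inner_smul_left,
    real_inner_smul_right, norm_sub_sq_real]
  ring

private lemma cont_sup'' {κ : Type*} {X : Type*} [TopologicalSpace X]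
    (s : Finset κ) (hs : s.Nonempty) (F : κ → X → ℝ) (hF : ∀ k, Continuous (F k)) :
    Continuous fun u => s.sup' hs fun k => F k u := by
  induction hs using Finset.Nonempty.cons_induction with
  | singleton a => simp only [Finset.sup'_singleton]; exact hF a
  | cons a s ha hs ih => simp only [Finset.sup'_cons hs]; exact (hF a).max ih

private lemma construct [FiniteDimensional ℝ E] {ι : Type} [Fintype ι] (L : ℝ) (hL : 0 < L)
    (x g : Option ι → E) (fv : Option ι → ℝ)
    (h1 : ∀ i j, fv i ≥ fv j - L / 4 * ‖x i - x j‖ ^ 2 + 1 / 2 * ⟪g i + g j, x i - x j⟫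
        + 1 / (4 * L) * ‖g i - g j‖ ^ 2)
    (h2 : ∀ i : ι, fv none ≤ fv (some i) - 1 / (2 * L) * ‖g (some i)‖ ^ 2)
    (h3 : g none = 0) :
    ∃ f : E → ℝ, Differentiable ℝ f ∧ (∀ u v, ‖gradient f u - gradient f v‖ ≤ L * ‖u - v‖) ∧
      (∀ z, f z ≥ f (x none)) ∧ (∀ i, f (x i) = fv i ∧ gradient f (x i) = g i) := by
  classical
  have hL' : L ≠ 0 := ne_of_gt hL
  set h : Option ι → E := fun i => g i + L • x i with hh
  set q : Option ι → E → ℝ :=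
    fun j u => fv j + L / 2 * ‖x j‖ ^ 2 + ⟪h j, u - x j⟫ + ‖h j‖ ^ 2 / (4 * L) with hq
  set r : E → ℝ := fun u => fv none + L * ‖u‖ ^ 2 with hr
  set m : E → ℝ :=
    fun u => max (Finset.univ.sup' Finset.univ_nonempty fun j => q j u) (r u) with hm
  have hmq : ∀ j u, q j u ≤ m u := fun j u =>
    le_max_of_le_left (Finset.le_sup' (fun k => q k u) (Finset.mem_univ j))
  have hmr : ∀ u, r u ≤ m u := fun u => le_max_right _ _
  have hm_le : ∀ u c, (∀ j, q j u ≤ c) → r u ≤ c → m u ≤ c := by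
    intro u c hqc hrc
    exact max_le (Finset.sup'_le _ _ fun j _ => hqc j) hrc
  -- continuity
  have hq_cont : ∀ j, Continuous (q j) := by
    intro j
    apply Continuous.add
    apply Continuous.add continuous_const
    exact (Continuous.inner continuous_const (continuous_id.sub continuous_const))
    exact continuous_const
  have hm_cont : Continuous m := by
    exact (cont_sup'' Finset.univ Finset.univ_nonempty (fun j u => q j u) hq_cont).max
      (continuous_const.add (continuous_const.mul ((continuous_norm).pow 2)))
  -- convexity
  have hconv : ∀ u p : E, ∀ t : ℝ, 0 ≤ t → t ≤ 1 →
      m (t • u + (1 - t) • p) ≤ t * m u + (1 - t) * m p := by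
    intro u p t ht0 ht1
    have ht1' : 0 ≤ 1 - t := by linarith
    apply hm_le
    · intro j
      have hlin : q j (t • u + (1 - t) • p) = t * q j u + (1 - t) * q j p := by
        simp only [hq]
        rw [show t • u + (1 - t) • p - x j = t • (u - x j) + (1 - t) • (p - x j) by module]
        rw [inner_add_right, real_inner_smul_right, real_inner_smul_right]
        ring
      rw [hlin]
      have a1 : t * q j u ≤ t * m u := mul_le_mul_of_nonneg_left (hmq j u) ht0
      have a2 : (1 - t) * q j p ≤ (1 - t) * m p := mul_le_mul_of_nonneg_left (hmq j p) ht1'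
      linarith
    · have hcs := combo_sq' u p t
      have a1 : t * r u ≤ t * m u := mul_le_mul_of_nonneg_left (hmr u) ht0
      have a2 : (1 - t) * r p ≤ (1 - t) * m p := mul_le_mul_of_nonneg_left (hmr p) ht1'
      have a3 : 0 ≤ L * (t * (1 - t) * ‖u - p‖ ^ 2) :=
        mul_nonneg hL.le (mul_nonneg (mul_nonneg ht0 ht1') (sq_nonneg _))
      simp only [hr] at a1 a2 ⊢
      rw [hcs]
      nlinarith [a1, a2, a3]
  -- existence of minimizers
  have hexists : ∀ z : E, ∃ pz : E, ∀ u, m pz + L * ‖z - pz‖ ^ 2 ≤ m u + L * ‖z - u‖ ^ 2 := by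
    intro z
    have hcont : Continuous fun u => m u + L * ‖z - u‖ ^ 2 :=
      hm_cont.add (continuous_const.mul (((continuous_const.sub continuous_id).norm).pow 2))
    have t1 : Tendsto (fun s : ℝ => fv none + L * s ^ 2) atTop atTop :=
      tendsto_atTop_add_const_left _ _ ((tendsto_pow_atTop two_ne_zero).const_mul_atTop hL)
    have t2 : Tendsto (fun u : E => ‖u‖) (cocompact E) atTop := tendsto_norm_cocompact_atTop
    have hco : Tendsto (fun u : E => m u + L * ‖z - u‖ ^ 2) (cocompact E) atTop := by
      apply tendsto_atTop_mono _ (t1.comp t2)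
      intro u
      simp only [Function.comp_apply]
      have := hmr u
      simp only [hr] at this
      nlinarith [sq_nonneg ‖z - u‖, mul_nonneg hL.le (sq_nonneg ‖z - u‖)]
    exact hcont.exists_forall_le hco
  choose p hp using hexists
  -- strong minimality
  have hstrong : ∀ z u : E,
      m (p z) + L * ‖z - p z‖ ^ 2 + L * ‖u - p z‖ ^ 2 ≤ m u + L * ‖z - u‖ ^ 2 := by
    intro z u
    by_cases hzero : u = p z
    · simp [hzero]
    · have hD : 0 < ‖u - p z‖ ^ 2 := by
        have h0 : (0:ℝ) < ‖u - p z‖ := norm_pos_iff.mpr (sub_ne_zero.2 hzero)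
        exact pow_pos h0 2
      have haux : ∀ t : ℝ, 0 < t → t < 1 → L * (1 - t) * ‖u - p z‖ ^ 2
          ≤ m u + L * ‖z - u‖ ^ 2 - (m (p z) + L * ‖z - p z‖ ^ 2) := by
        intro t ht0 ht1
        have h4 := hp z (t • u + (1 - t) • p z)
        have h5 := hconv u (p z) t ht0.le ht1.le
        have h6 : ‖z - (t • u + (1 - t) • p z)‖ ^ 2
            = t * ‖z - u‖ ^ 2 + (1 - t) * ‖z - p z‖ ^ 2 - t * (1 - t) * ‖u - p z‖ ^ 2 := by
          rw [show z - (t • u + (1 - t) • p z) = t • (z - u) + (1 - t) • (z - p z) by module]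
          rw [combo_sq']
          congr 2
          rw [show z - u - (z - p z) = -(u - p z) by module, norm_neg]
        rw [h6] at h4
        nlinarith [h4, h5, ht0, hD]
      by_contra hcon
      push_neg at hcon
      set S := m u + L * ‖z - u‖ ^ 2 - (m (p z) + L * ‖z - p z‖ ^ 2) with hS
      have hS0 : 0 ≤ S := by have := hp z u; simp only [hS]; linarith
      have hSD : S < L * ‖u - p z‖ ^ 2 := by simp only [hS]; linarith
      set D := ‖u - p z‖ ^ 2 with hDd
      have hLD : 0 < L * D := mul_pos hL hD
      have ht0 : 0 < (L * D - S) / (2 * L * D) := div_pos (by linarith) (by linarith)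
      have ht1 : (L * D - S) / (2 * L * D) < 1 := by
        rw [div_lt_one (by positivity)]
        linarith
      have hT := haux _ ht0 ht1
      have hcalc : L * (1 - (L * D - S) / (2 * L * D)) * D = (L * D + S) / 2 := by
        field_simp
        ring
      rw [hcalc] at hT
      linarith [hT, hS0, hSD]
  -- firm nonexpansiveness
  have hfirm : ∀ z₁ z₂ : E, ‖p z₁ - p z₂‖ ^ 2 ≤ ⟪z₁ - z₂, p z₁ - p z₂⟫ := by
    intro z₁ z₂
    have h4 := hstrong z₁ (p z₂)
    have h5 := hstrong z₂ (p z₁)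
    apply (mul_le_mul_iff_right₀ hL).1
    have hc : L * ⟪p z₂, p z₁⟫ = L * ⟪p z₁, p z₂⟫ := by rw [real_inner_comm]
    simp only [norm_sub_sq_real, inner_sub_left, inner_sub_right] at h4 h5 ⊢
    linarith [h4, h5, hc]
  have hnonexp : ∀ z₁ z₂ : E, ‖p z₁ - p z₂‖ ≤ ‖z₁ - z₂‖ := by
    intro z₁ z₂
    nlinarith [hfirm z₁ z₂, real_inner_le_norm (z₁ - z₂) (p z₁ - p z₂),
      norm_nonneg (p z₁ - p z₂), norm_nonneg (z₁ - z₂)]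
  -- the function and its gradient
  set f : E → ℝ := fun z => m (p z) + L * ‖z - p z‖ ^ 2 - L / 2 * ‖z‖ ^ 2 with hf
  set G : E → E := fun z => (2 * L) • (z - p z) - L • z with hG
  have hbound : ∀ z y : E, |f y - f z - ⟪G z, y - z⟫| ≤ 2 * L * ‖y - z‖ ^ 2 := by
    intro z y
    have hA := hp y (p z)
    have hB := hp z (p y)
    have hCS : |⟪y - z, p z - p y⟫| ≤ ‖y - z‖ * ‖p z - p y‖ := abs_real_inner_le_norm _ _
    have hNE : ‖p z - p y‖ ≤ ‖y - z‖ := (hnonexp z y).trans_eq (norm_sub_rev z y)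
    have hE : |⟪y - z, p z - p y⟫| ≤ ‖y - z‖ ^ 2 := by
      calc |⟪y - z, p z - p y⟫| ≤ ‖y - z‖ * ‖p z - p y‖ := hCS
        _ ≤ ‖y - z‖ * ‖y - z‖ := mul_le_mul_of_nonneg_left hNE (norm_nonneg _)
        _ = ‖y - z‖ ^ 2 := (sq ‖y - z‖).symm
    rw [abs_le] at hE
    have hE2 : 2 * L * ⟪y - z, p z - p y⟫ ≤ 2 * L * ‖y - z‖ ^ 2 :=
      mul_le_mul_of_nonneg_left hE.2 (by positivity)
    have hE3 : 2 * L * (-(‖y - z‖ ^ 2)) ≤ 2 * L * ⟪y - z, p z - p y⟫ :=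
      mul_le_mul_of_nonneg_left hE.1 (by positivity)
    have hc1 : L * ⟪p z, y⟫ = L * ⟪y, p z⟫ := by rw [real_inner_comm]
    have hc2 : L * ⟪p z, z⟫ = L * ⟪z, p z⟫ := by rw [real_inner_comm]
    have hc3 : L * ⟪p y, y⟫ = L * ⟪y, p y⟫ := by rw [real_inner_comm]
    have hc4 : L * ⟪p y, z⟫ = L * ⟪z, p y⟫ := by rw [real_inner_comm]
    have hc5 : L * ⟪z, y⟫ = L * ⟪y, z⟫ := by rw [real_inner_comm]
    rw [abs_le]
    constructor
    · simp only [hf, hG, norm_sub_sq_real, inner_sub_left, inner_sub_right,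
        real_inner_smul_left, real_inner_self_eq_norm_sq] at hB hE2 hE3 ⊢
      linarith [hB, hE2, hE3, hc1, hc2, hc3, hc4, hc5]
    · simp only [hf, hG, norm_sub_sq_real, inner_sub_left, inner_sub_right,
        real_inner_smul_left, real_inner_self_eq_norm_sq] at hA hE2 hE3 ⊢
      linarith [hA, hE2, hE3, hc1, hc2, hc3, hc4, hc5]
  have hgrad : ∀ z, HasGradientAt f (G z) z := by
    intro z
    rw [hasGradientAt_iff_isLittleO, Asymptotics.isLittleO_iff]
    intro c hc
    have hball : Metric.closedBall z (c / (2 * L)) ∈ nhds z :=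
      Metric.closedBall_mem_nhds z (div_pos hc (by linarith))
    filter_upwards [hball] with y hy
    rw [Metric.mem_closedBall, dist_eq_norm] at hy
    have h9 := hbound z y
    have hid : 2 * L * (c / (2 * L)) = c := by field_simp
    have hy' : 2 * L * ‖y - z‖ ≤ c := by
      have := mul_le_mul_of_nonneg_left hy (by positivity : (0:ℝ) ≤ 2 * L)
      rw [hid] at this
      exact this
    rw [Real.norm_eq_abs]
    calc |f y - f z - ⟪G z, y - z⟫| ≤ 2 * L * ‖y - z‖ ^ 2 := h9
      _ ≤ c * ‖y - z‖ := by nlinarith [hy', norm_nonneg (y - z)]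
  have hdiff : Differentiable ℝ f := fun z => (hgrad z).hasFDerivAt.differentiableAt
  have hgradeq : ∀ z, gradient f z = G z := fun z => (hgrad z).gradient
  have hlip : ∀ u v, ‖gradient f u - gradient f v‖ ≤ L * ‖u - v‖ := by
    intro u v
    rw [hgradeq, hgradeq]
    have hGG : G u - G v = L • (u - v) - (2 * L) • (p u - p v) := by
      simp only [hG]; module
    have hsq : ‖G u - G v‖ ^ 2 ≤ (L * ‖u - v‖) ^ 2 := by
      rw [hGG, norm_sub_sq_real]
      simp only [norm_smul, Real.norm_eq_abs, mul_pow, sq_abs, real_inner_smul_left,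
        real_inner_smul_right]
      nlinarith [mul_le_mul_of_nonneg_left (hfirm u v) (by positivity : (0:ℝ) ≤ 4 * L ^ 2)]
    nlinarith [hsq, norm_nonneg (G u - G v), mul_nonneg hL.le (norm_nonneg (u - v))]
  -- data points
  set u₀ : Option ι → E := fun i => x i - (1 / (2 * L)) • h i with hu
  have hq_self : ∀ i, q i (u₀ i) = fv i + L / 2 * ‖x i‖ ^ 2 - ‖h i‖ ^ 2 / (4 * L) := by
    intro i
    simp only [hq, hu]
    rw [show x i - (1 / (2 * L)) • h i - x i = -((1 / (2 * L)) • h i) by module]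
    rw [inner_neg_right, real_inner_smul_right, real_inner_self_eq_norm_sq]
    field_simp
    ring
  have hqq : ∀ i k, q k (u₀ i) ≤ q i (u₀ i) := by
    intro i k
    have key : q i (u₀ i) - q k (u₀ i)
        = fv i - (fv k - L / 4 * ‖x i - x k‖ ^ 2 + 1 / 2 * ⟪g i + g k, x i - x k⟫
          + 1 / (4 * L) * ‖g i - g k‖ ^ 2) := by
      rw [hq_self i]
      simp only [hq, hu, hh]
      simp only [inner_add_left, inner_add_right, inner_sub_left, inner_sub_right,
        real_inner_smul_left, real_inner_smul_right, norm_add_sq_real, norm_sub_sq_real,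
        norm_smul, Real.norm_eq_abs, mul_pow, sq_abs, real_inner_self_eq_norm_sq]
      simp only [real_inner_comm (x k) (x i), real_inner_comm (g k) (g i),
        real_inner_comm (x i) (g i), real_inner_comm (x k) (g k),
        real_inner_comm (x i) (g k), real_inner_comm (x k) (g i)]
      field_simp
      ring
    rw [← sub_nonneg, key]
    have h1' := h1 i k
    linarith [h1']
  have hqr : ∀ i, r (u₀ i) ≤ q i (u₀ i) := by
    have key : ∀ i, q i (u₀ i) - r (u₀ i) = fv i - fv none - 1 / (2 * L) * ‖g i‖ ^ 2 := by
      intro i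
      rw [hq_self i]
      simp only [hr, hu, hh]
      simp only [inner_add_left, inner_add_right, inner_sub_left, inner_sub_right,
        real_inner_smul_left, real_inner_smul_right, norm_add_sq_real, norm_sub_sq_real,
        norm_smul, Real.norm_eq_abs, mul_pow, sq_abs, real_inner_self_eq_norm_sq]
      simp only [real_inner_comm (x i) (g i)]
      field_simp
      ring
    intro i
    match i with
    | none =>
      rw [← sub_nonneg, key none, h3]
      simp
    | some j =>
      rw [← sub_nonneg, key (some j)]
      linarith [h2 j]
  have hmu : ∀ i, m (u₀ i) = q i (u₀ i) :=
    fun i => le_antisymm (hm_le _ _ (hqq i) (hqr i)) (hmq i (u₀ i))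
  have humin : ∀ i u, q i (u₀ i) + L * ‖x i - u₀ i‖ ^ 2 ≤ m u + L * ‖x i - u‖ ^ 2 := by
    intro i u
    have keym : (q i u + L * ‖x i - u‖ ^ 2) - (q i (u₀ i) + L * ‖x i - u₀ i‖ ^ 2)
        = L * ‖u - u₀ i‖ ^ 2 := by
      rw [hq_self i]
      simp only [hq, hu, hh]
      simp only [inner_add_left, inner_add_right, inner_sub_left, inner_sub_right,
        real_inner_smul_left, real_inner_smul_right, norm_add_sq_real, norm_sub_sq_real,
        norm_smul, Real.norm_eq_abs, mul_pow, sq_abs, real_inner_self_eq_norm_sq]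
      simp only [real_inner_comm u (x i), real_inner_comm u (g i),
        real_inner_comm (x i) (g i)]
      field_simp
      ring
    linarith [keym, hmq i u, mul_nonneg hL.le (sq_nonneg ‖u - u₀ i‖)]
  have hpu : ∀ i, p (x i) = u₀ i := by
    intro i
    have ha := humin i (p (x i))
    have hs := hstrong (x i) (u₀ i)
    rw [hmu i] at hs
    have hz : L * ‖u₀ i - p (x i)‖ ^ 2 ≤ 0 := by linarith
    have hsq0 : ‖u₀ i - p (x i)‖ ^ 2 = 0 := by
      have h9 : ‖u₀ i - p (x i)‖ ^ 2 ≤ 0 := by nlinarith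
      exact le_antisymm h9 (sq_nonneg _)
    exact (eq_of_sub_eq_zero (norm_eq_zero.mp ((pow_eq_zero_iff two_ne_zero).mp hsq0))).symm
  have hval : ∀ i, f (x i) = fv i := by
    intro i
    simp only [hf]
    rw [hpu i, hmu i, hq_self i]
    rw [show x i - u₀ i = (1 / (2 * L)) • h i by simp only [hu]; module]
    rw [norm_smul]
    simp only [Real.norm_eq_abs, mul_pow, sq_abs]
    field_simp
    ring
  have hgval : ∀ i, G (x i) = g i := by
    intro i
    simp only [hG]
    rw [hpu i]
    rw [show x i - u₀ i = (1 / (2 * L)) • h i by simp only [hu]; module]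
    rw [smul_smul, show (2 * L) * (1 / (2 * L)) = 1 by field_simp, one_smul]
    simp only [hh]
    module
  have hlow : ∀ z, f z ≥ f (x none) := by
    intro z
    rw [hval none]
    have hmrz := hmr (p z)
    simp only [hr] at hmrz
    simp only [hf]
    have hexpL : L * ‖z - p z‖ ^ 2 = L * (‖z‖ ^ 2 - 2 * ⟪z, p z⟫ + ‖p z‖ ^ 2) := by
      rw [norm_sub_sq_real]
    have hcs := mul_le_mul_of_nonneg_left (real_inner_le_norm z (p z))
      (by positivity : (0:ℝ) ≤ 2 * L)
    linarith [hmrz, hexpL, hcs, mul_nonneg hL.le (sq_nonneg (2 * ‖p z‖ - ‖z‖))]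
  exact ⟨f, hdiff, hlip, hlow, fun i => ⟨hval i, by rw [hgradeq, hgval]⟩⟩

end All

/-- Interpolation for `F_{-L,L}` with a global lower bound.
The index set `I ∪ {⋆}` is encoded as `Option ι`, with `none` playing the role of `⋆`. -/
theorem stmt_5 (d : ℕ) (ι : Type) [Fintype ι] (L : ℝ) (hL : 0 < L)
    (x g : Option ι → EuclideanSpace ℝ (Fin d)) (fv : Option ι → ℝ) :
    (∃ f : EuclideanSpace ℝ (Fin d) → ℝ,
      Differentiable ℝ f ∧
      (∀ u v, ‖gradient f u - gradient f v‖ ≤ L * ‖u - v‖) ∧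
      (∀ z, f z ≥ f (x none)) ∧
      (∀ i, f (x i) = fv i ∧ gradient f (x i) = g i)) ↔
    ((∀ i j, fv i ≥ fv j - L / 4 * ‖x i - x j‖ ^ 2
        + 1 / 2 * ⟪g i + g j, x i - x j⟫
        + 1 / (4 * L) * ‖g i - g j‖ ^ 2) ∧
      (∀ i : ι, fv none ≤ fv (some i) - 1 / (2 * L) * ‖g (some i)‖ ^ 2) ∧
      g none = 0) := by
  constructor
  · rintro ⟨f, hdiff, hlip, hmin, hint⟩
    have hgz : gradient f (x none) = 0 := by
      have hloc : IsLocalMin f (x none) := Filter.Eventually.of_forall fun z => hmin z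
      have h0 := hloc.fderiv_eq_zero
      show (InnerProductSpace.toDual ℝ _).symm (fderiv ℝ f (x none)) = 0
      rw [h0]
      simp
    refine ⟨?_, ?_, by rw [← (hint none).2, hgz]⟩
    · intro i j
      set y := (1/2 : ℝ) • (x i + x j) + (1/(2*L)) • (g j - g i) with hy
      have d1 := descent hL.le hdiff hlip (x i) y
      have d2 := descent hL.le hdiff hlip (x j) y
      rw [(hint i).1, (hint i).2] at d1
      rw [(hint j).1, (hint j).2] at d2
      have d1u := (abs_le.mp d1).2
      have d2l := (abs_le.mp d2).1
      have key : ⟪g j, y - x j⟫ - ⟪g i, y - x i⟫ - L/2 * ‖y - x i‖^2 - L/2 * ‖y - x j‖^2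
          = -(L/4) * ‖x i - x j‖^2 + 1/2 * ⟪g i + g j, x i - x j⟫
            + 1/(4*L) * ‖g i - g j‖^2 := by
        have hL' : L ≠ 0 := ne_of_gt hL
        simp only [hy]
        simp only [inner_add_left, inner_add_right, inner_sub_left, inner_sub_right,
          real_inner_smul_left, real_inner_smul_right, norm_add_sq_real, norm_sub_sq_real,
          norm_smul, Real.norm_eq_abs, mul_pow, sq_abs, real_inner_self_eq_norm_sq]
        simp only [real_inner_comm (x j) (x i), real_inner_comm (g j) (g i),
          real_inner_comm (x i) (g i), real_inner_comm (x j) (g j),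
          real_inner_comm (x i) (g j), real_inner_comm (x j) (g i)]
        field_simp
        ring
      linarith [d1u, d2l, key]
    · intro i
      set y := x (some i) - (1/L) • g (some i) with hy
      have d1 := descent hL.le hdiff hlip (x (some i)) y
      rw [(hint (some i)).1, (hint (some i)).2] at d1
      have hm := hmin y
      rw [(hint none).1] at hm
      have hsub : y - x (some i) = -((1/L) • g (some i)) := by simp only [hy]; module
      rw [hsub] at d1
      have d1' := (abs_le.mp d1).2
      have e1 : ⟪g (some i), -((1/L) • g (some i))⟫ = -(1/L) * ‖g (some i)‖^2 := by
        rw [inner_neg_right, real_inner_smul_right, real_inner_self_eq_norm_sq]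
        ring
      have e2 : ‖-((1/L) • g (some i))‖^2 = (1/L)^2 * ‖g (some i)‖^2 := by
        rw [norm_neg, norm_smul]
        simp [Real.norm_eq_abs, mul_pow, sq_abs]
      rw [e1, e2] at d1'
      have harith : -(1/L) * ‖g (some i)‖^2 + L/2 * ((1/L)^2 * ‖g (some i)‖^2)
          = -(1/(2*L)) * ‖g (some i)‖^2 := by
        have hL' : L ≠ 0 := ne_of_gt hL
        field_simp
        ring
      linarith [d1', hm, harith]
  · rintro ⟨h1, h2, h3⟩
    exact construct L hL x g fv h1 h2 h3
end

section
/- Let f : ℝ^d → ℝ and let x⋆ ∈ ℝ^d satisfy f(x⋆) ≤ f(z) for all z ∈ ℝ^d. Let x_0, …, x_{N+1} ∈ ℝ^d and g_0, …, g_N ∈ ℝ^d satisfy, for every k ∈ [0:N]: x_{k+1} = x_k − h g_k, g_k is a 1-weak-convexity subgradient of f at x_k, and ‖g_k‖ ≤ L̃. For each k ∈ [0:N+1] let y_k ∈ ℝ^d be a global minimizer of w ↦ f(w) + ‖w − x_k‖² such that 2(x_k − y_k) is a 1-weak-convexity subgradient of f at y_k. Define ψ_k = b_k (f(y_k) − f(x⋆)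 + ‖x_k − y_k‖²) for k ∈ [0:N+1]. Then for every k ∈ [0:N]: ‖2(x_k − y_k)‖² + ψ_{k+1} − ψ_k ≤ c_k ‖g_k‖². Moreover, if f(y_0) − f(x⋆) + ‖x_0 − y_0‖² ≤ R², then (1/(N+1)) Σ_{i=0}^{N} ‖2(x_i − y_i)‖² ≤ (1/(N+1)) (L̃² Σ_{i=0}^{N} c_i + b_0 R²). -/
open scoped RealInnerProductSpace

set_option maxHeartbeats 1600000 in
/-- Potential-function analysis of the subgradient method for 1-weakly
convex functions with `L̃`-bounded subgradients (Theorem `thm:weakly-ncvx-main`).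
Here `y k` is a global minimizer of `w ↦ f w + ‖w - x k‖²` (the proximal point),
`2 (x k - y k)` is the Moreau-envelope gradient, `b` solves the backward recursion
`b (N+1) = 0`, `b k = 4 + (1 - 2h) b (k+1)`, and `c k = h² b (k+1)`. -/
theorem stmt_8 (d : ℕ) (Ltil R h : ℝ) (hLtil : 0 < Ltil) (hR : 0 < R)
    (hh : h ∈ Set.Ioc (0 : ℝ) (1 / 2)) (N : ℕ)
    (b c : ℕ → ℝ)
    (hbterm : b (N + 1) = 0)
    (hbrec : ∀ k ≤ N, b k = 4 + (1 - 2 * h) * b (k + 1))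
    (hc : ∀ k ≤ N, c k = h ^ 2 * b (k + 1))
    (f : EuclideanSpace ℝ (Fin d) → ℝ)
    (xstar : EuclideanSpace ℝ (Fin d)) (hxstar : ∀ z, f xstar ≤ f z)
    (x g y : ℕ → EuclideanSpace ℝ (Fin d))
    (hstep : ∀ k ≤ N, x (k + 1) = x k - h • g k)
    (hsub : ∀ k ≤ N, ∀ z, f z ≥ f (x k) + ⟪g k, z - x k⟫ - 1 / 2 * ‖z - x k‖ ^ 2)
    (hgbd : ∀ k ≤ N, ‖g k‖ ≤ Ltil)
    (hy : ∀ k ≤ N + 1, ∀ w, f (y k) + ‖y k - x k‖ ^ 2 ≤ f w + ‖w - x k‖ ^ 2)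
    (hysub : ∀ k ≤ N + 1, ∀ z,
      f z ≥ f (y k) + ⟪(2 : ℝ) • (x k - y k), z - y k⟫ - 1 / 2 * ‖z - y k‖ ^ 2)
    (ψ : ℕ → ℝ)
    (hψ : ∀ k ≤ N + 1, ψ k = b k * (f (y k) - f xstar + ‖x k - y k‖ ^ 2)) :
    (∀ k ≤ N, ‖(2 : ℝ) • (x k - y k)‖ ^ 2 + ψ (k + 1) - ψ k ≤ c k * ‖g k‖ ^ 2) ∧
    (f (y 0) - f xstar + ‖x 0 - y 0‖ ^ 2 ≤ R ^ 2 →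
      1 / ((N : ℝ) + 1) * ∑ i ∈ Finset.range (N + 1), ‖(2 : ℝ) • (x i - y i)‖ ^ 2 ≤
        1 / ((N : ℝ) + 1) *
          (Ltil ^ 2 * ∑ i ∈ Finset.range (N + 1), c i + b 0 * R ^ 2)) := by
  obtain ⟨hh0, hh2⟩ := hh
  have h2h : (0:ℝ) ≤ 1 - 2 * h := by linarith
  -- nonnegativity and boundedness of b by downward induction
  have hbj : ∀ j, 0 ≤ b (N + 1 - j) ∧ h * b (N + 1 - j) ≤ 2 := by
    intro j
    induction j with
    | zero =>
      simp only [Nat.sub_zero, hbterm]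
      constructor <;> nlinarith
    | succ j ih =>
      by_cases hj : j + 1 ≤ N + 1
      · have hk : N + 1 - (j + 1) = N - j := by omega
        have hk1 : N - j + 1 = N + 1 - j := by omega
        have hle : N - j ≤ N := Nat.sub_le _ _
        have hrec := hbrec (N - j) hle
        rw [hk, hrec, hk1]
        obtain ⟨ih1, ih2⟩ := ih
        constructor
        · nlinarith
        · nlinarith
      · have : N + 1 - (j + 1) = N + 1 - j := by omega
        rw [this]; exact ih
  have hb : ∀ k, k ≤ N + 1 → 0 ≤ b k ∧ h * b k ≤ 2 := by
    intro k hk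
    have := hbj (N + 1 - k)
    rwa [Nat.sub_sub_self hk] at this
  -- key descent inequality for the proximal gap
  have hdesc : ∀ k ≤ N,
      f (y (k+1)) - f xstar + ‖x (k+1) - y (k+1)‖ ^ 2 ≤
      f (y k) - f xstar + ‖x k - y k‖ ^ 2 - 2 * h * ‖x k - y k‖ ^ 2
        + h ^ 2 * ‖g k‖ ^ 2 := by
    intro k hk
    have hA := hy (k+1) (by omega) (y k)
    have hB : ‖y k - x (k+1)‖ ^ 2
        = ‖y k - x k‖ ^ 2 + 2 * (h * ⟪g k, y k - x k⟫) + h ^ 2 * ‖g k‖ ^ 2 := by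
      rw [hstep k hk, show y k - (x k - h • g k) = (y k - x k) + h • g k from by abel,
        norm_add_sq_real, real_inner_smul_right, real_inner_comm, norm_smul,
        Real.norm_eq_abs, mul_pow, sq_abs]
    have hC := hsub k hk (y k)
    have hD := hysub k (by omega) (x k)
    rw [real_inner_smul_left, real_inner_self_eq_norm_sq] at hD
    have hrev1 : ‖y k - x k‖ ^ 2 = ‖x k - y k‖ ^ 2 := by rw [norm_sub_rev]
    have hrev2 : ‖y (k+1) - x (k+1)‖ ^ 2 = ‖x (k+1) - y (k+1)‖ ^ 2 := by
      rw [norm_sub_rev]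
    have hC' : 2 * h * ⟪g k, y k - x k⟫
        ≤ 2 * h * (f (y k) - f (x k) + 1 / 2 * ‖y k - x k‖ ^ 2) :=
      mul_le_mul_of_nonneg_left (by linarith) (by linarith)
    have hD' : 2 * h * (f (y k) - f (x k))
        ≤ 2 * h * (-(3 / 2) * ‖x k - y k‖ ^ 2) :=
      mul_le_mul_of_nonneg_left (by nlinarith) (by linarith)
    nlinarith [hA, hB, hC', hD', hrev1, hrev2]
  -- the per-step potential inequality
  have part1 : ∀ k ≤ N,
      ‖(2 : ℝ) • (x k - y k)‖ ^ 2 + ψ (k + 1) - ψ k ≤ c k * ‖g k‖ ^ 2 := by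
    intro k hk
    have h4 : ‖(2 : ℝ) • (x k - y k)‖ ^ 2 = 4 * ‖x k - y k‖ ^ 2 := by
      rw [norm_smul, mul_pow]
      norm_num
    have hb1 := (hb (k+1) (by omega)).1
    have hb2 := (hb (k+1) (by omega)).2
    have hF : 0 ≤ f (y k) - f xstar := by linarith [hxstar (y k)]
    have hE := hdesc k hk
    have hE' := mul_le_mul_of_nonneg_left hE hb1
    have hprod : 0 ≤ (2 - h * b (k+1)) * (f (y k) - f xstar) :=
      mul_nonneg (by linarith) hF
    rw [hψ (k+1) (by omega), hψ k (by omega), hbrec k hk, hc k hk, h4]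
    nlinarith [hE', hprod]
  refine ⟨part1, ?_⟩
  intro hR0
  have hb0 := (hb 0 (by omega)).1
  -- per-step bound with Ltil
  have per : ∀ i ∈ Finset.range (N + 1),
      ‖(2 : ℝ) • (x i - y i)‖ ^ 2 ≤ Ltil ^ 2 * c i + (ψ i - ψ (i + 1)) := by
    intro i hi
    have hiN : i ≤ N := Finset.mem_range_succ_iff.mp hi
    have h1 := part1 i hiN
    have hci : 0 ≤ c i := by
      rw [hc i hiN]
      exact mul_nonneg (sq_nonneg h) (hb (i+1) (by omega)).1
    have hg2 : ‖g i‖ ^ 2 ≤ Ltil ^ 2 := by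
      have := hgbd i hiN
      nlinarith [norm_nonneg (g i)]
    have : c i * ‖g i‖ ^ 2 ≤ c i * Ltil ^ 2 := mul_le_mul_of_nonneg_left hg2 hci
    nlinarith
  have hsum := Finset.sum_le_sum per
  rw [Finset.sum_add_distrib, Finset.sum_range_sub' (fun i => ψ i)] at hsum
  have hψ0 : ψ 0 ≤ b 0 * R ^ 2 := by
    rw [hψ 0 (by omega)]
    exact mul_le_mul_of_nonneg_left hR0 hb0
  have hψN : ψ (N + 1) = 0 := by
    rw [hψ (N+1) (le_refl _), hbterm, zero_mul]
  have hsum2 : ∑ i ∈ Finset.range (N + 1), ‖(2 : ℝ) • (x i - y i)‖ ^ 2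
      ≤ Ltil ^ 2 * ∑ i ∈ Finset.range (N + 1), c i + b 0 * R ^ 2 := by
    rw [Finset.mul_sum]
    calc ∑ i ∈ Finset.range (N + 1), ‖(2 : ℝ) • (x i - y i)‖ ^ 2
        ≤ (∑ i ∈ Finset.range (N + 1), Ltil ^ 2 * c i) + (ψ 0 - ψ (N + 1)) :=
          hsum
      _ ≤ (∑ i ∈ Finset.range (N + 1), Ltil ^ 2 * c i) + b 0 * R ^ 2 := by
          rw [hψN]; linarith
  have hpos : (0:ℝ) ≤ 1 / ((N : ℝ) + 1) := by positivity
  exact mul_le_mul_of_nonneg_left hsum2 hpos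
end

section
/- Let f : ℝ^d → ℝ and let x⋆ ∈ ℝ^d satisfy f(x⋆) ≤ f(z) for all z ∈ ℝ^d. Set κ = R/L̃ and h = √(4κ²(N+1)+1) / (2(N+1)), and assume 4κ²(N+1) + 1 ≤ (N+1)² (so that h ∈ (0, 1/2]). Let x_0, …, x_{N+1} ∈ ℝ^d and g_0, …, g_N ∈ ℝ^d satisfy, for every k ∈ [0:N]: x_{k+1} = x_k − h g_k, g_k is a 1-weak-convexity subgradient of f at x_k, and ‖g_k‖ ≤ L̃. For each k ∈ [0:N+1] let y_k ∈ ℝ^d be a global minimizer of w ↦ f(w) + ‖w − x_k‖² such that 2(x_k − y_k) is a 1-weak-convexity subgradient of f at y_k. If f(y_0) − f(x⋆) + ‖x_0 − y_0‖² ≤ R², then (1/(N+1)) Σ_{i=0}^{N} ‖2(x_i − y_i)‖² ≤ L̃² (2√(4κ²(N+1)+1) − 1) / (N+1). -/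
open scoped RealInnerProductSpace

lemma aux_scalar (h L : ℝ) (N : ℕ) (φ q : ℕ → ℝ)
    (hh : 0 < h) (hh2 : h ≤ 1 / 2)
    (hq : ∀ k, k ≤ N → q k ≤ φ k)
    (hdesc : ∀ k, k ≤ N → φ (k + 1) ≤ φ k - 2 * h * q k + h ^ 2 * L ^ 2) :
    ∀ j, j ≤ N + 1 →
      ∑ i ∈ Finset.Ico (N + 1 - j) (N + 1), 4 * q i ≤
        (2 / h) * (1 - (1 - 2 * h) ^ j) * φ (N + 1 - j) +
          L ^ 2 * (2 * h * (j : ℝ) - 1 + (1 - 2 * h) ^ j) := by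
  intro j
  induction j with
  | zero => intro _; simp
  | succ j ih =>
    intro hj
    have hjN : j ≤ N := by omega
    have hk1 : N + 1 - (j + 1) = N - j := by omega
    have hk2 : N + 1 - j = (N - j) + 1 := by omega
    have hlt : N - j < N + 1 := by omega
    rw [hk1, Finset.sum_eq_sum_Ico_succ_bot hlt]
    have IH := ih (by omega)
    rw [hk2] at IH
    have hd := hdesc (N - j) (by omega)
    have hqk := hq (N - j) (by omega)
    have hpnn : (0:ℝ) ≤ (1 - 2 * h) ^ j := pow_nonneg (by linarith) j
    have hple : (1 - 2 * h) ^ j ≤ 1 := pow_le_one₀ (by linarith) (by linarith)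
    have hAnn : (0:ℝ) ≤ (2 / h) * (1 - (1 - 2 * h) ^ j) :=
      mul_nonneg (by positivity) (by linarith)
    have hstep1 : (2 / h) * (1 - (1 - 2 * h) ^ j) * φ ((N - j) + 1) ≤
        (2 / h) * (1 - (1 - 2 * h) ^ j) * (φ (N - j) - 2 * h * q (N - j) + h ^ 2 * L ^ 2) :=
      mul_le_mul_of_nonneg_left hd hAnn
    have hhA : 2 * h * ((2 / h) * (1 - (1 - 2 * h) ^ j)) = 4 * (1 - (1 - 2 * h) ^ j) := by
      field_simp
      ring
    have hcoef : (0:ℝ) ≤ 4 - 2 * h * ((2 / h) * (1 - (1 - 2 * h) ^ j)) := by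
      rw [hhA]; nlinarith
    have hstep2 : (4 - 2 * h * ((2 / h) * (1 - (1 - 2 * h) ^ j))) * q (N - j) ≤
        (4 - 2 * h * ((2 / h) * (1 - (1 - 2 * h) ^ j))) * φ (N - j) :=
      mul_le_mul_of_nonneg_left hqk hcoef
    have hA1 : (2 / h) * (1 - (1 - 2 * h) ^ (j + 1)) =
        4 + (1 - 2 * h) * ((2 / h) * (1 - (1 - 2 * h) ^ j)) := by
      rw [pow_succ]
      field_simp
      ring
    have hC1 : (2 * h * ((j:ℝ) + 1) - 1 + (1 - 2 * h) ^ (j + 1)) =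
        (2 * h * (j:ℝ) - 1 + (1 - 2 * h) ^ j) + h ^ 2 * ((2 / h) * (1 - (1 - 2 * h) ^ j)) := by
      rw [pow_succ]
      field_simp
      ring
    push_cast
    rw [hA1, hC1]
    nlinarith [IH, hstep1, hstep2, hhA]


set_option maxHeartbeats 1000000 in
/-- Corollary `cor:main-cor`. The subgradient method with stepsize
`h = √(4κ²(N+1)+1)/(2(N+1))`, `κ = R/L̃`, on a 1-weakly convex function with
`L̃`-bounded subgradients achieves
`(1/(N+1)) ∑_{i=0}^N ‖∇f_{(1/2)}(x_i)‖² ≤ L̃²(2√(4κ²(N+1)+1) - 1)/(N+1)`,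
where `∇f_{(1/2)}(x_i) = 2(x_i - y_i)` and `y_i` is the proximal point of `x_i`. -/
theorem stmt_14 (d : ℕ) (Ltil R : ℝ) (hLtil : 0 < Ltil) (hR : 0 < R) (N : ℕ)
    (κ h : ℝ) (hκ : κ = R / Ltil)
    (hdef : h = Real.sqrt (4 * κ ^ 2 * ((N : ℝ) + 1) + 1) / (2 * ((N : ℝ) + 1)))
    (hsmall : 4 * κ ^ 2 * ((N : ℝ) + 1) + 1 ≤ ((N : ℝ) + 1) ^ 2)
    (f : EuclideanSpace ℝ (Fin d) → ℝ)
    (xstar : EuclideanSpace ℝ (Fin d)) (hxstar : ∀ z, f xstar ≤ f z)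
    (x g y : ℕ → EuclideanSpace ℝ (Fin d))
    (hstep : ∀ k ≤ N, x (k + 1) = x k - h • g k)
    (hsub : ∀ k ≤ N, ∀ z, f z ≥ f (x k) + ⟪g k, z - x k⟫ - 1 / 2 * ‖z - x k‖ ^ 2)
    (hgbd : ∀ k ≤ N, ‖g k‖ ≤ Ltil)
    (hy : ∀ k ≤ N + 1, ∀ w, f (y k) + ‖y k - x k‖ ^ 2 ≤ f w + ‖w - x k‖ ^ 2)
    (hysub : ∀ k ≤ N + 1, ∀ z,
      f z ≥ f (y k) + ⟪(2 : ℝ) • (x k - y k), z - y k⟫ - 1 / 2 * ‖z - y k‖ ^ 2)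
    (hinit : f (y 0) - f xstar + ‖x 0 - y 0‖ ^ 2 ≤ R ^ 2) :
    1 / ((N : ℝ) + 1) * ∑ i ∈ Finset.range (N + 1), ‖(2 : ℝ) • (x i - y i)‖ ^ 2 ≤
      Ltil ^ 2 * (2 * Real.sqrt (4 * κ ^ 2 * ((N : ℝ) + 1) + 1) - 1) / ((N : ℝ) + 1) := by
  have hT : (0:ℝ) < (N : ℝ) + 1 := by positivity
  set S : ℝ := Real.sqrt (4 * κ ^ 2 * ((N : ℝ) + 1) + 1) with hSdef
  have hSnn : (0:ℝ) ≤ 4 * κ ^ 2 * ((N : ℝ) + 1) + 1 := by positivity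
  have hS2 : S ^ 2 = 4 * κ ^ 2 * ((N : ℝ) + 1) + 1 := Real.sq_sqrt hSnn
  have hSnn' : 0 ≤ S := Real.sqrt_nonneg _
  have hS1 : 1 ≤ S := by nlinarith [hS2, sq_nonneg κ]
  have hS0 : 0 < S := by linarith
  have hSle : S ≤ (N : ℝ) + 1 := by nlinarith [hS2, hsmall]
  have hhpos : 0 < h := by rw [hdef]; positivity
  have hhalf : h ≤ 1 / 2 := by
    rw [hdef, div_le_div_iff₀ (by positivity) (by norm_num)]
    linarith
  have hm : 2 * h * ((N : ℝ) + 1) = S := by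
    rw [hdef]; field_simp
  -- potentials
  set φ : ℕ → ℝ := fun k => f (y k) - f xstar + ‖x k - y k‖ ^ 2 with hφdef
  set q : ℕ → ℝ := fun k => ‖x k - y k‖ ^ 2 with hqdef
  have hqφ : ∀ k, k ≤ N → q k ≤ φ k := by
    intro k _
    have := hxstar (y k)
    simp only [hφdef, hqdef]
    linarith
  -- descent lemma
  have hdesc : ∀ k, k ≤ N → φ (k + 1) ≤ φ k - 2 * h * q k + h ^ 2 * Ltil ^ 2 := by
    intro k hk
    have e1 := hy (k + 1) (by omega) (y k)
    have hx1 := hstep k hk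
    have hsplit : y k - x (k + 1) = (y k - x k) + h • g k := by
      rw [hx1]; abel
    have expand : ‖(y k - x k) + h • g k‖ ^ 2 =
        ‖y k - x k‖ ^ 2 + 2 * h * ⟪g k, y k - x k⟫ + h ^ 2 * ‖g k‖ ^ 2 := by
      rw [norm_add_sq_real, real_inner_smul_right, real_inner_comm (y k - x k) (g k),
        norm_smul, Real.norm_eq_abs, mul_pow, sq_abs]
      ring
    have e2 := hsub k hk (y k)
    have e3 := hysub k (by omega) (x k)
    have e3' : ⟪(2 : ℝ) • (x k - y k), x k - y k⟫ = 2 * ‖x k - y k‖ ^ 2 := by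
      rw [real_inner_smul_left, real_inner_self_eq_norm_sq]
    rw [e3'] at e3
    have hyx2 : ‖y k - x k‖ ^ 2 = ‖x k - y k‖ ^ 2 := by rw [norm_sub_rev]
    have e5 : ⟪g k, y k - x k⟫ ≤ -‖x k - y k‖ ^ 2 := by
      nlinarith [e2, e3, hyx2]
    have e6 : 2 * h * ⟪g k, y k - x k⟫ ≤ 2 * h * (-‖x k - y k‖ ^ 2) :=
      mul_le_mul_of_nonneg_left e5 (by positivity)
    have e4 : ‖g k‖ ≤ Ltil := hgbd k hk
    have e7 : h ^ 2 * ‖g k‖ ^ 2 ≤ h ^ 2 * Ltil ^ 2 :=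
      mul_le_mul_of_nonneg_left (by nlinarith [norm_nonneg (g k)]) (sq_nonneg h)
    rw [hsplit, expand] at e1
    have hyx2' : ‖y (k+1) - x (k+1)‖ ^ 2 = ‖x (k+1) - y (k+1)‖ ^ 2 := by rw [norm_sub_rev]
    simp only [hφdef, hqdef]
    linarith [e1, e6, e7, hyx2, hyx2']
  -- main induction applied at j = N + 1
  have main := aux_scalar h Ltil N φ q hhpos hhalf hqφ hdesc (N + 1) le_rfl
  simp only [Nat.sub_self] at main
  set r : ℝ := (1 - 2 * h) ^ (N + 1) with hrdef
  have hr0 : (0:ℝ) ≤ r := pow_nonneg (by linarith) _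
  have hr1 : r ≤ 1 := pow_le_one₀ (by linarith) (by linarith)
  clear_value r
  have hAnn : (0:ℝ) ≤ (2 / h) * (1 - r) := mul_nonneg (by positivity) (by linarith)
  have hφ0 : φ 0 ≤ R ^ 2 := hinit
  have hRκ : R ^ 2 = κ ^ 2 * Ltil ^ 2 := by
    rw [hκ]; field_simp
  have hk4 : 4 * κ ^ 2 * ((N : ℝ) + 1) = S ^ 2 - 1 := by linarith
  have hineq : (S ^ 2 - 1) * (1 - r) ≤ S * (S - r) := by
    nlinarith [mul_nonneg (mul_nonneg hr0 hSnn') (by linarith : (0:ℝ) ≤ S - 1)]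
  have h2h : 2 / h = 4 * ((N : ℝ) + 1) / S := by
    rw [hdef]
    rw [div_eq_div_iff (by positivity) hS0.ne']
    field_simp
    ring
  have hfrac : (2 / h) * (1 - r) * R ^ 2 = ((S ^ 2 - 1) * (1 - r) / S) * Ltil ^ 2 := by
    rw [h2h, hRκ, ← hk4]
    ring
  have hfrac2 : ((S ^ 2 - 1) * (1 - r) / S) * Ltil ^ 2 ≤ (S - r) * Ltil ^ 2 := by
    apply mul_le_mul_of_nonneg_right _ (by positivity)
    rw [div_le_iff₀ hS0]
    nlinarith [hineq]
  -- assemble the total bound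
  have hsum_cast : 2 * h * ((N + 1 : ℕ) : ℝ) = S := by push_cast; linarith [hm]
  have hbound : ∑ i ∈ Finset.Ico 0 (N + 1), 4 * q i ≤ Ltil ^ 2 * (2 * S - 1) := by
    have step1 : (2 / h) * (1 - r) * φ 0 ≤ (2 / h) * (1 - r) * R ^ 2 :=
      mul_le_mul_of_nonneg_left hφ0 hAnn
    have := main
    rw [hsum_cast] at this
    calc ∑ i ∈ Finset.Ico 0 (N + 1), 4 * q i
        ≤ (2 / h) * (1 - r) * φ 0 + Ltil ^ 2 * (S - 1 + r) := by
          exact this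
      _ ≤ (2 / h) * (1 - r) * R ^ 2 + Ltil ^ 2 * (S - 1 + r) := by linarith
      _ = ((S ^ 2 - 1) * (1 - r) / S) * Ltil ^ 2 + Ltil ^ 2 * (S - 1 + r) := by rw [hfrac]
      _ ≤ (S - r) * Ltil ^ 2 + Ltil ^ 2 * (S - 1 + r) := by linarith [hfrac2]
      _ = Ltil ^ 2 * (2 * S - 1) := by ring
  -- convert the goal sum
  have hsum_eq : ∑ i ∈ Finset.range (N + 1), ‖(2 : ℝ) • (x i - y i)‖ ^ 2
      = ∑ i ∈ Finset.Ico 0 (N + 1), 4 * q i := by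
    rw [Finset.range_eq_Ico]
    apply Finset.sum_congr rfl
    intro i _
    have : ‖(2 : ℝ) • (x i - y i)‖ = 2 * ‖x i - y i‖ := by
      rw [norm_smul, Real.norm_eq_abs, abs_of_pos (by norm_num : (0:ℝ) < 2)]
    rw [this]
    simp only [hqdef]
    ring
  rw [hsum_eq]
  have hfin : Ltil ^ 2 * (2 * S - 1) / ((N : ℝ) + 1)
      = 1 / ((N : ℝ) + 1) * (Ltil ^ 2 * (2 * S - 1)) := by ring
  rw [hfin]
  exact mul_le_mul_of_nonneg_left hbound (by positivity)
end
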